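/- arXiv:0708.3932 — 10 statements merged into one kernel-verified Lean document; each statement's English description precedes it below -/
import Mathlib

section
/- For a, λ > 0: ∫₀^∞ (1 − e^{−λx}) e^{−ax} / x dx = log(1 + λ/a). -/
/-!
This is Frullani's integral for `f x = exp (-x)`, which tends to `1` at `0⁺` and to `0` at `+∞`,
applied to the exponents `a` and `a + λ`. The only extra input is integrability on `(0, ∞)`: for
`a ≤ b` the integrand lies between `0` and `(b - a) * exp (-(a * x))`, since `1 - exp (-y) ≤ y`.
-/

open MeasureTheory Set Real Filter Topology

lemma inv_mul_exp_neg_sub_exp_neg_le {a b x : ℝ} (hx : 0 < x) :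
    x⁻¹ * (exp (-(a * x)) - exp (-(b * x))) ≤ (b - a) * exp (-(a * x)) := by
  have hsplit : exp (-(b * x)) = exp (-(a * x)) * exp (-((b - a) * x)) := by
    rw [← exp_add]; ring_nf
  have hlin : 1 - exp (-((b - a) * x)) ≤ (b - a) * x := by
    linarith [one_sub_le_exp_neg ((b - a) * x)]
  rw [inv_mul_le_iff₀ hx, hsplit]
  nlinarith [exp_pos (-(a * x))]

lemma integrableOn_inv_mul_exp_neg_sub_exp_neg {a b : ℝ} (ha : 0 < a) (hb : 0 < b) :
    IntegrableOn (fun x ↦ x⁻¹ * (exp (-(a * x)) - exp (-(b * x)))) (Ioi 0) := by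
  wlog hab : a ≤ b generalizing a b
  · refine ((this hb ha (le_of_not_ge hab)).neg).congr_fun (fun x _ ↦ ?_) measurableSet_Ioi
    simp only [Pi.neg_apply]
    ring
  have hmeas : AEStronglyMeasurable (fun x ↦ x⁻¹ * (exp (-(a * x)) - exp (-(b * x))))
      (volume.restrict (Ioi 0)) :=
    (ContinuousOn.mul (continuousOn_inv₀.mono fun x hx ↦ ne_of_gt hx)
      (by fun_prop)).aestronglyMeasurable measurableSet_Ioi
  have hbound : IntegrableOn (fun x ↦ (b - a) * exp (-(a * x))) (Ioi 0) := by
    rw [IntegrableOn]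
    simpa only [neg_mul] using (exp_neg_integrableOn_Ioi 0 ha).const_mul (b - a)
  refine Integrable.mono' hbound hmeas ?_
  filter_upwards [ae_restrict_mem measurableSet_Ioi] with x (hx : 0 < x)
  have hnonneg : 0 ≤ x⁻¹ * (exp (-(a * x)) - exp (-(b * x))) :=
    mul_nonneg (inv_nonneg.2 hx.le) (sub_nonneg.2 (exp_le_exp.2 (by nlinarith)))
  rw [norm_of_nonneg hnonneg]
  exact inv_mul_exp_neg_sub_exp_neg_le hx

theorem integral_inv_mul_exp_neg_sub_exp_neg {a b : ℝ} (ha : 0 < a) (hb : 0 < b) :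
    ∫ x in Ioi 0, x⁻¹ * (exp (-(a * x)) - exp (-(b * x))) = log (b / a) := by
  have hf : Continuous fun x : ℝ ↦ exp (-x) := by fun_prop
  have hzero : Tendsto (fun x : ℝ ↦ exp (-x)) (𝓝[>] 0) (𝓝 1) := by
    simpa using (hf.tendsto 0).mono_left nhdsWithin_le_nhds
  simpa using Frullani.integral_Ioi_eq (hf.locallyIntegrable.locallyIntegrableOn _) ha hb hzero
    tendsto_exp_neg_atTop_nhds_zero (integrableOn_inv_mul_exp_neg_sub_exp_neg ha hb)

theorem frullani_exp (a l : ℝ) (ha : 0 < a) (hl : 0 < l) :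
    ∫ x in Ioi (0:ℝ), (1 - Real.exp (-(l * x))) * Real.exp (-(a * x)) / x
      = Real.log (1 + l / a) := by
  have hintegrand : (fun x ↦ (1 - exp (-(l * x))) * exp (-(a * x)) / x)
      = fun x ↦ x⁻¹ * (exp (-(a * x)) - exp (-((a + l) * x))) := by
    funext x
    rw [show -((a + l) * x) = -(a * x) + -(l * x) by ring, exp_add]
    ring
  rw [hintegrand, integral_inv_mul_exp_neg_sub_exp_neg ha (by linarith), add_div,
    div_self ha.ne']
end

section
/- Let a, b, c > 0 and let γ_a be Gamma(a)-distributed and β_{b,c} Beta(b,c)-distributed, independent. Then for all λ > 0: E[exp(−λ γ_a / β_{b,c})] = (Γ(a+b)Γ(b+c))/(Γ(b)Γ(a+b+c)) · λ^{−a} · F(a, a+b, a+b+c; −1/λ), where F is the Gauss hypergeometric function given by its Euler integral representation F(α,δ,γ;z) = Γ(γ)/(Γ(δ)Γ(γ−δ)) ∫₀¹ t^{δ−1}(1−t)^{γ−δ−1}(1−tz)^{−α} dt. -/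
open MeasureTheory Set Real

/-!
Integrate out the gamma variable first (Tonelli, everything is nonnegative): the Laplace
transform of the gamma law is `E[exp(-s γ_a)] = (1 + s)^(-a)`, here at `s = λ / t`. Writing
`(1 + λ/t)^(-a) = λ^(-a) t^a (1 + t/λ)^(-a)`, the factor `t^a` turns the beta weight
`t^(b-1) (1-t)^(c-1)` into Euler's integrand for `F(a, a+b, a+b+c; -1/λ)`, and the constants
match through the Gamma normalisations.
-/

/-- Euler integral representation of the Gauss hypergeometric function. -/
noncomputable def gaussF (α δ γ z : ℝ) : ℝ :=
  (Real.Gamma γ / (Real.Gamma δ * Real.Gamma (γ - δ))) *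
    ∫ t in Ioo (0:ℝ) 1, t ^ (δ - 1) * (1 - t) ^ (γ - δ - 1) * (1 - t * z) ^ (-α)

theorem integral_integral_swap_of_nonneg {α β : Type*} [MeasurableSpace α] [MeasurableSpace β]
    {μ : Measure α} {ν : Measure β} [SFinite μ] [SFinite ν] {f : α → β → ℝ}
    (hf : AEStronglyMeasurable (Function.uncurry f) (μ.prod ν))
    (hf_nonneg : ∀ᵐ y ∂ν, ∀ᵐ x ∂μ, 0 ≤ f x y)
    (hf_int : ∀ᵐ y ∂ν, Integrable (f · y) μ)
    (hg_int : Integrable (fun y ↦ ∫ x, f x y ∂μ) ν) :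
    ∫ x, ∫ y, f x y ∂ν ∂μ = ∫ y, ∫ x, f x y ∂μ ∂ν := by
  refine integral_integral_swap ((integrable_prod_iff' hf).2 ⟨hf_int, hg_int.congr ?_⟩)
  filter_upwards [hf_nonneg] with y hy
  exact integral_congr_ae <| by
    filter_upwards [hy] with x hx using (Real.norm_of_nonneg hx).symm

theorem integrableOn_rpow_mul_exp_neg_mul_Ioi {a r : ℝ} (ha : 0 < a) (hr : 0 < r) :
    IntegrableOn (fun x : ℝ ↦ x ^ (a - 1) * exp (-(r * x))) (Ioi 0) := by
  simpa [Real.rpow_one] using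
    integrableOn_rpow_mul_exp_neg_mul_rpow (p := 1) (s := a - 1) (by linarith) one_pos hr

theorem integrableOn_rpow_mul_one_sub_rpow {p q : ℝ} (hp : 0 < p) (hq : 0 < q) :
    IntegrableOn (fun t : ℝ ↦ t ^ (p - 1) * (1 - t) ^ (q - 1)) (Ioo 0 1) := by
  have h := (Complex.betaIntegral_convergent (u := p) (v := q) (by simpa) (by simpa)).norm
  rw [intervalIntegrable_iff_integrableOn_Ioo_of_le zero_le_one] at h
  refine h.congr_fun (fun t ⟨ht0, ht1⟩ ↦ ?_) measurableSet_Ioo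
  have h1t : 0 < 1 - t := by linarith
  have hcast : 1 - (t : ℂ) = ((1 - t : ℝ) : ℂ) := by push_cast; rfl
  dsimp only
  rw [norm_mul, hcast, Complex.norm_cpow_eq_rpow_re_of_pos ht0,
    Complex.norm_cpow_eq_rpow_re_of_pos h1t]
  simp

theorem integrableOn_gaussF_integrand {α δ γ z : ℝ} (hα : 0 ≤ α) (hδ : 0 < δ) (hδγ : δ < γ)
    (hz : z ≤ 0) :
    IntegrableOn (fun t : ℝ ↦ t ^ (δ - 1) * (1 - t) ^ (γ - δ - 1) * (1 - t * z) ^ (-α))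
      (Ioo 0 1) := by
  refine (integrableOn_rpow_mul_one_sub_rpow hδ (sub_pos.2 hδγ)).mono'
    (by fun_prop) (ae_restrict_of_forall_mem measurableSet_Ioo fun t ⟨ht0, ht1⟩ ↦ ?_)
  have h1t : 0 < 1 - t := by linarith
  have hz1 : 1 ≤ 1 - t * z := by nlinarith
  rw [Real.norm_of_nonneg (by positivity)]
  exact mul_le_of_le_one_right (by positivity)
    (Real.rpow_le_one_of_one_le_of_nonpos hz1 (neg_nonpos.2 hα))

theorem exp_neg_mul_mul_gamma_density_eq (a s x : ℝ) :
    exp (-(s * x)) * (x ^ (a - 1) * exp (-x) / Gamma a) =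
      (Gamma a)⁻¹ * (x ^ (a - 1) * exp (-((1 + s) * x))) := by
  rw [show -((1 + s) * x) = -(s * x) + -x by ring, exp_add]
  ring

theorem integrableOn_exp_neg_mul_mul_gamma_density {a s : ℝ} (ha : 0 < a) (hs : -1 < s) :
    IntegrableOn (fun x ↦ exp (-(s * x)) * (x ^ (a - 1) * exp (-x) / Gamma a)) (Ioi 0) := by
  simp_rw [exp_neg_mul_mul_gamma_density_eq]
  exact (integrableOn_rpow_mul_exp_neg_mul_Ioi ha (by linarith)).const_mul _

theorem integral_exp_neg_mul_mul_gamma_density {a s : ℝ} (ha : 0 < a) (hs : -1 < s) :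
    ∫ x in Ioi 0, exp (-(s * x)) * (x ^ (a - 1) * exp (-x) / Gamma a) = (1 + s) ^ (-a) := by
  have hs' : 0 < 1 + s := by linarith
  simp_rw [exp_neg_mul_mul_gamma_density_eq]
  rw [integral_const_mul, integral_rpow_mul_exp_neg_mul_Ioi ha hs', mul_comm _ (Gamma a),
    inv_mul_cancel_left₀ (Gamma_pos_of_pos ha).ne', one_div, inv_rpow hs'.le, ← rpow_neg hs'.le]

theorem one_add_div_rpow_neg {t l : ℝ} (ht : 0 < t) (hl : 0 < l) (a : ℝ) :
    (1 + l / t) ^ (-a) = l ^ (-a) * t ^ a * (1 + t / l) ^ (-a) := by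
  have hsplit : 1 + l / t = l / t * (1 + t / l) := by field_simp; ring
  rw [hsplit, mul_rpow (by positivity) (by positivity), div_rpow hl.le ht.le,
    rpow_neg ht.le, div_inv_eq_mul]

theorem integral_exp_neg_mul_div_mul_gamma_density {a l t : ℝ} (ha : 0 < a) (hl : 0 < l)
    (ht : 0 < t) :
    ∫ x in Ioi 0, exp (-(l * x / t)) * (x ^ (a - 1) * exp (-x) / Gamma a) =
      l ^ (-a) * t ^ a * (1 - t * (-1 / l)) ^ (-a) := by
  simp_rw [mul_div_right_comm l]
  rw [integral_exp_neg_mul_mul_gamma_density ha (by linarith [div_pos hl ht]),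
    one_add_div_rpow_neg ht hl, show 1 - t * (-1 / l) = 1 + t / l by ring]

theorem laplace_gamma_over_beta (a b c l : ℝ) (ha : 0 < a) (hb : 0 < b)
    (hc : 0 < c) (hl : 0 < l) :
    (∫ x in Ioi (0:ℝ), ∫ t in Ioo (0:ℝ) 1,
        Real.exp (-(l * x / t)) * (x ^ (a - 1) * Real.exp (-x) / Real.Gamma a) *
          (t ^ (b - 1) * (1 - t) ^ (c - 1) *
            (Real.Gamma (b + c) / (Real.Gamma b * Real.Gamma c))))
      = (Real.Gamma (a + b) * Real.Gamma (b + c)) /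
          (Real.Gamma b * Real.Gamma (a + b + c)) * l ^ (-a) *
          gaussF a (a + b) (a + b + c) (-1 / l) := by
  set C := Gamma (b + c) / (Gamma b * Gamma c) * l ^ (-a)
  set euler := fun t : ℝ ↦
    t ^ (a + b - 1) * (1 - t) ^ (a + b + c - (a + b) - 1) * (1 - t * (-1 / l)) ^ (-a)
  have hinner : ∀ t ∈ Ioo (0:ℝ) 1, ∫ x in Ioi (0:ℝ),
      exp (-(l * x / t)) * (x ^ (a - 1) * exp (-x) / Gamma a) *
        (t ^ (b - 1) * (1 - t) ^ (c - 1) * (Gamma (b + c) / (Gamma b * Gamma c)))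
      = C * euler t := by
    rintro t ⟨ht0, -⟩
    rw [integral_mul_const, integral_exp_neg_mul_div_mul_gamma_density ha hl ht0]
    have hpow : t ^ (a + b - 1) = t ^ a * t ^ (b - 1) := by rw [← rpow_add ht0, add_sub_assoc]
    have hexp : a + b + c - (a + b) - 1 = c - 1 := by ring
    simp only [euler, C, hpow, hexp]
    ring
  have hint : IntegrableOn euler (Ioo 0 1) :=
    integrableOn_gaussF_integrand ha.le (by linarith) (by linarith)
      (div_nonpos_of_nonpos_of_nonneg (by norm_num) hl.le)
  refine (integral_integral_swap_of_nonneg ?_ ?_ ?_ ?_).trans ?_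
  · exact Measurable.aestronglyMeasurable (by fun_prop)
  · filter_upwards [ae_restrict_mem measurableSet_Ioo] with t ⟨ht0, ht1⟩
    filter_upwards [ae_restrict_mem measurableSet_Ioi] with x (hx : 0 < x)
    have h1t : 0 < 1 - t := by linarith
    positivity
  · filter_upwards [ae_restrict_mem measurableSet_Ioo] with t ht
    simp_rw [mul_div_right_comm l]
    exact (integrableOn_exp_neg_mul_mul_gamma_density ha
      (by linarith [div_pos hl ht.1])).mul_const _
  · exact (hint.const_mul C).congr <|
      (ae_restrict_of_forall_mem measurableSet_Ioo hinner).mono fun _ h ↦ h.symm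
  rw [setIntegral_congr_fun measurableSet_Ioo hinner, integral_const_mul, gaussF]
  simp only [C, euler, add_sub_cancel_left]
  field_simp
end

section
/- Let a, b, c > 0, γ_a Gamma(a)-distributed, β_{b,c} Beta(b,c)-distributed, independent. Then for all λ ≥ 0: E[exp(−λ γ_a β_{b,c})] = F(a, b, b+c; −λ), with F the Gauss hypergeometric function in its Euler integral representation. -/
open MeasureTheory Set Real

lemma aux_rpow_max {x lo : ℝ} (p : ℝ) (hlo : 0 < lo) (h1 : lo ≤ x) (h2 : x ≤ 1) :
    x ^ p ≤ max 1 (lo ^ p) := by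
  rcases le_or_gt 0 p with hp | hp
  · exact le_max_of_le_left (Real.rpow_le_one (hlo.le.trans h1) h2 hp)
  · exact le_max_of_le_right (Real.rpow_le_rpow_of_nonpos hlo h1 hp.le)

lemma beta_integrable {b c : ℝ} (hb : 0 < b) (hc : 0 < c) :
    IntegrableOn (fun t : ℝ => t ^ (b - 1) * (1 - t) ^ (c - 1)) (Ioo (0:ℝ) 1) := by
  have hmeas : Measurable (fun t : ℝ => t ^ (b - 1) * (1 - t) ^ (c - 1)) := by fun_prop
  have hA : IntegrableOn (fun t : ℝ => t ^ (b - 1) * (1 - t) ^ (c - 1))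
      (Ioo (0:ℝ) (2/3)) := by
    have hA0 : IntegrableOn (fun t : ℝ => t ^ (b - 1)) (Ioo (0:ℝ) (2/3)) :=
      (intervalIntegral.integrableOn_Ioo_rpow_iff (by norm_num)).mpr (by linarith)
    refine Integrable.mono' (hA0.const_mul (max 1 ((1/3:ℝ) ^ (c - 1))))
      hmeas.aestronglyMeasurable.restrict ?_
    refine (ae_restrict_iff' measurableSet_Ioo).mpr (.of_forall fun t ht => ?_)
    obtain ⟨ht0, ht1⟩ := ht
    have h1t : (1/3:ℝ) ≤ 1 - t := by linarith
    have h1t' : 1 - t ≤ 1 := by linarith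
    have hb1 : (1 - t) ^ (c - 1) ≤ max 1 ((1/3:ℝ) ^ (c - 1)) :=
      aux_rpow_max _ (by norm_num) h1t h1t'
    rw [Real.norm_eq_abs, abs_of_nonneg (mul_nonneg (Real.rpow_nonneg ht0.le _)
      (Real.rpow_nonneg (by linarith) _))]
    calc t ^ (b - 1) * (1 - t) ^ (c - 1)
        ≤ t ^ (b - 1) * max 1 ((1/3:ℝ) ^ (c - 1)) :=
          mul_le_mul_of_nonneg_left hb1 (Real.rpow_nonneg ht0.le _)
      _ = max 1 ((1/3:ℝ) ^ (c - 1)) * t ^ (b - 1) := mul_comm _ _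
  have hB : IntegrableOn (fun t : ℝ => t ^ (b - 1) * (1 - t) ^ (c - 1))
      (Ioo (1/3:ℝ) 1) := by
    have hB0 : IntervalIntegrable (fun s : ℝ => s ^ (c - 1)) volume 0 (2/3) :=
      intervalIntegral.intervalIntegrable_rpow' (by linarith)
    have hB1 := (hB0.comp_sub_left 1).symm
    have hB2 : IntegrableOn (fun t : ℝ => (1 - t) ^ (c - 1)) (Ioo (1/3:ℝ) 1) := by
      rw [show (1:ℝ) - 2/3 = 1/3 by norm_num, show (1:ℝ) - 0 = 1 by norm_num,
        intervalIntegrable_iff_integrableOn_Ioo_of_le (by norm_num)] at hB1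
      exact hB1
    refine Integrable.mono' (hB2.const_mul (max 1 ((1/3:ℝ) ^ (b - 1))))
      hmeas.aestronglyMeasurable.restrict ?_
    refine (ae_restrict_iff' measurableSet_Ioo).mpr (.of_forall fun t ht => ?_)
    obtain ⟨ht0, ht1⟩ := ht
    have ht0' : (0:ℝ) ≤ t := by linarith
    have h0t : (0:ℝ) ≤ 1 - t := by linarith
    have hb1 : t ^ (b - 1) ≤ max 1 ((1/3:ℝ) ^ (b - 1)) :=
      aux_rpow_max _ (by norm_num) ht0.le ht1.le
    rw [Real.norm_eq_abs, abs_of_nonneg (mul_nonneg (Real.rpow_nonneg ht0' _)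
      (Real.rpow_nonneg h0t _))]
    exact mul_le_mul_of_nonneg_right hb1 (Real.rpow_nonneg h0t _)
  refine (hA.union hB).mono_set fun t ht => ?_
  rcases lt_or_ge t (2/3) with h | h
  · exact Or.inl ⟨ht.1, h⟩
  · exact Or.inr ⟨by linarith [ht.1], ht.2⟩

theorem laplace_gamma_times_beta (a b c l : ℝ) (ha : 0 < a) (hb : 0 < b)
    (hc : 0 < c) (hl : 0 ≤ l) :
    (∫ x in Ioi (0:ℝ), ∫ t in Ioo (0:ℝ) 1,
        Real.exp (-(l * x * t)) * (x ^ (a - 1) * Real.exp (-x) / Real.Gamma a) *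
          (t ^ (b - 1) * (1 - t) ^ (c - 1) *
            (Real.Gamma (b + c) / (Real.Gamma b * Real.Gamma c))))
      = gaussF a b (b + c) (-l) := by
  set K : ℝ := Real.Gamma (b + c) / (Real.Gamma b * Real.Gamma c) with hK
  have hK0 : 0 ≤ K := by
    have h1 := Real.Gamma_pos_of_pos hb
    have h2 := Real.Gamma_pos_of_pos hc
    have h3 := Real.Gamma_pos_of_pos (by linarith : 0 < b + c)
    positivity
  have hΓa : 0 < Real.Gamma a := Real.Gamma_pos_of_pos ha
  set f : ℝ → ℝ → ℝ := fun x t =>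
    Real.exp (-(l * x * t)) * (x ^ (a - 1) * Real.exp (-x) / Real.Gamma a) *
      (t ^ (b - 1) * (1 - t) ^ (c - 1) * K) with hf
  set g : ℝ → ℝ := fun t => t ^ (b - 1) * (1 - t) ^ (c - 1) with hg
  have hgint : IntegrableOn g (Ioo (0:ℝ) 1) := beta_integrable hb hc
  have hg0 : ∀ t ∈ Ioo (0:ℝ) 1, 0 ≤ g t := fun t ht =>
    mul_nonneg (Real.rpow_nonneg ht.1.le _) (Real.rpow_nonneg (by linarith [ht.2]) _)
  have hmeasf : AEStronglyMeasurable (Function.uncurry f)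
      ((volume.restrict (Ioi (0:ℝ))).prod (volume.restrict (Ioo (0:ℝ) 1))) := by
    apply Measurable.aestronglyMeasurable
    apply Measurable.mul
    apply Measurable.mul
    · fun_prop
    · fun_prop
    · fun_prop
  -- pointwise bound for x > 0
  have hbound : ∀ x ∈ Ioi (0:ℝ), ∀ t ∈ Ioo (0:ℝ) 1,
      ‖f x t‖ ≤ (x ^ (a - 1) * Real.exp (-x) / Real.Gamma a * K) * g t := by
    intro x hx t ht
    have hx0 : 0 < x := hx
    have ht0 := ht.1
    have hxa : (0:ℝ) ≤ x ^ (a - 1) := Real.rpow_nonneg hx0.le _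
    have hgt := hg0 t ht
    have hexp : Real.exp (-(l * x * t)) ≤ 1 := by
      rw [Real.exp_le_one_iff]
      have : 0 ≤ l * x * t := by positivity
      linarith
    have hC : (0:ℝ) ≤ x ^ (a - 1) * Real.exp (-x) / Real.Gamma a :=
      div_nonneg (mul_nonneg hxa (Real.exp_pos _).le) hΓa.le
    have hfnn : 0 ≤ f x t :=
      mul_nonneg (mul_nonneg (Real.exp_pos _).le hC) (mul_nonneg hgt hK0)
    rw [Real.norm_eq_abs, abs_of_nonneg hfnn]
    have hCg : 0 ≤ (x ^ (a - 1) * Real.exp (-x) / Real.Gamma a) * (g t * K) :=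
      mul_nonneg hC (mul_nonneg hgt hK0)
    calc f x t = Real.exp (-(l * x * t)) *
          ((x ^ (a - 1) * Real.exp (-x) / Real.Gamma a) * (g t * K)) := by
            simp only [hf, hg]; ring
      _ ≤ 1 * ((x ^ (a - 1) * Real.exp (-x) / Real.Gamma a) * (g t * K)) :=
            mul_le_mul_of_nonneg_right hexp hCg
      _ = (x ^ (a - 1) * Real.exp (-x) / Real.Gamma a * K) * g t := by ring
  have hinner : ∀ᵐ x ∂volume.restrict (Ioi (0:ℝ)),
      Integrable (fun t => f x t) (volume.restrict (Ioo (0:ℝ) 1)) := by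
    refine (ae_restrict_mem measurableSet_Ioi).mono fun x hx => ?_
    refine Integrable.mono' (hgint.const_mul (x ^ (a - 1) * Real.exp (-x) / Real.Gamma a * K))
      ?_ ?_
    · apply Measurable.aestronglyMeasurable
      apply Measurable.mul
      apply Measurable.mul
      · fun_prop
      · fun_prop
      · fun_prop
    · exact (ae_restrict_iff' measurableSet_Ioo).mpr
        (.of_forall fun t ht => hbound x hx t ht)
  have hIf : Integrable (Function.uncurry f)
      ((volume.restrict (Ioi (0:ℝ))).prod (volume.restrict (Ioo (0:ℝ) 1))) := by
    rw [MeasureTheory.integrable_prod_iff hmeasf]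
    refine ⟨hinner, ?_⟩
    set B : ℝ := ∫ t in Ioo (0:ℝ) 1, g t with hB
    have hB0 : 0 ≤ B := setIntegral_nonneg measurableSet_Ioo hg0
    have hGam : IntegrableOn (fun x : ℝ => Real.exp (-x) * x ^ (a - 1)) (Ioi 0) :=
      Real.GammaIntegral_convergent ha
    refine Integrable.mono' (hGam.const_mul (K * B / Real.Gamma a))
      (hmeasf.norm.integral_prod_right') ?_
    refine (ae_restrict_iff' measurableSet_Ioi).mpr (.of_forall fun x hx => ?_)
    have hx0 : (0:ℝ) < x := hx
    simp only [Function.uncurry_apply_pair]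
    have h1 : ∀ t ∈ Ioo (0:ℝ) 1, ‖f x t‖ ≤
        (x ^ (a - 1) * Real.exp (-x) / Real.Gamma a * K) * g t := hbound x hx
    have hnn : 0 ≤ ∫ t in Ioo (0:ℝ) 1, ‖f x t‖ :=
      setIntegral_nonneg measurableSet_Ioo fun t _ => norm_nonneg _
    rw [Real.norm_eq_abs, abs_of_nonneg hnn]
    calc (∫ t in Ioo (0:ℝ) 1, ‖f x t‖)
        ≤ ∫ t in Ioo (0:ℝ) 1,
            (x ^ (a - 1) * Real.exp (-x) / Real.Gamma a * K) * g t := by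
          refine integral_mono_of_nonneg (.of_forall fun t => norm_nonneg _)
            (hgint.const_mul _) ?_
          exact (ae_restrict_iff' measurableSet_Ioo).mpr (.of_forall h1)
      _ = (x ^ (a - 1) * Real.exp (-x) / Real.Gamma a * K) * B := by
          rw [MeasureTheory.integral_const_mul]
      _ = K * B / Real.Gamma a * (Real.exp (-x) * x ^ (a - 1)) := by ring
  have hswap : (∫ x in Ioi (0:ℝ), ∫ t in Ioo (0:ℝ) 1, f x t)
      = ∫ t in Ioo (0:ℝ) 1, ∫ x in Ioi (0:ℝ), f x t :=
    MeasureTheory.integral_integral_swap hIf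
  have hinnerval : ∀ t ∈ Ioo (0:ℝ) 1,
      (∫ x in Ioi (0:ℝ), f x t) = K * (g t * (1 + l * t) ^ (-a)) := by
    intro t ht
    have ht0 := ht.1
    have hr : 0 < 1 + l * t := by positivity
    have step1 : (∫ x in Ioi (0:ℝ), f x t)
        = (g t * K / Real.Gamma a) *
          ∫ x in Ioi (0:ℝ), x ^ (a - 1) * Real.exp (-((1 + l * t) * x)) := by
      rw [← MeasureTheory.integral_const_mul]
      refine setIntegral_congr_fun measurableSet_Ioi fun x hx => ?_
      simp only [hf, hg]
      have hexp2 : Real.exp (-((1 + l * t) * x))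
          = Real.exp (-(l * x * t)) * Real.exp (-x) := by
        rw [← Real.exp_add]; congr 1; ring
      rw [hexp2]; ring
    rw [step1, Real.integral_rpow_mul_exp_neg_mul_Ioi ha hr]
    rw [one_div, Real.inv_rpow hr.le, ← Real.rpow_neg hr.le]
    field_simp
  have hRHSint : (∫ t in Ioo (0:ℝ) 1, ∫ x in Ioi (0:ℝ), f x t)
      = K * ∫ t in Ioo (0:ℝ) 1, g t * (1 + l * t) ^ (-a) := by
    rw [← MeasureTheory.integral_const_mul]
    exact setIntegral_congr_fun measurableSet_Ioo hinnerval
  have hLHS : (∫ x in Ioi (0:ℝ), ∫ t in Ioo (0:ℝ) 1,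
        Real.exp (-(l * x * t)) * (x ^ (a - 1) * Real.exp (-x) / Real.Gamma a) *
          (t ^ (b - 1) * (1 - t) ^ (c - 1) *
            (Real.Gamma (b + c) / (Real.Gamma b * Real.Gamma c))))
      = ∫ x in Ioi (0:ℝ), ∫ t in Ioo (0:ℝ) 1, f x t := rfl
  rw [hLHS, hswap, hRHSint]
  unfold gaussF
  rw [show b + c - b = c by ring]
  rw [← hK]
  congr 1
  refine setIntegral_congr_fun measurableSet_Ioo fun t ht => ?_
  simp only [hg]
  rw [show 1 - t * -l = 1 + l * t by ring]
end

section
/- Let ε be a standard exponential random variable and β a Beta(1/2,1/2) (arcsine) random variable, independent. Then for all λ ≥ 0: ∫₀^∞ (1 − e^{−λx}) (1/x) E[e^{−x/β}] dx = 2(log(√(1+λ) + 1) − log 2). Consequently, exp(−t ∫₀^∞ (1 − e^{−λx}) (1/x) E[e^{−x/β}] dx) = (2/(1 + √(1+λ)))^{2t}. -/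
/-!
Write `E[e^{-x/β}] = ∫₀¹ ρ(u) e^{-x/u} du` with `ρ` the arcsine density, and
`(1 - e^{-λx}) / x = ∫₀^λ e^{-sx} ds`. Two applications of Fubini turn the left-hand side into
`∫₀^λ ∫₀¹ ρ(u) u / (1 + su) du ds`. The substitution `u = t² / (1 + t²)` carries the half-Cauchy
law `2 / (π (1 + t²)) dt` to `ρ(u) du`, which gives the Stieltjes transform
`∫₀¹ ρ(u) / (1 + su) du = (1 + s)^{-1/2}`; hence the inner integral is `(1 - (1 + s)^{-1/2}) / s`,
the derivative of `2 log (1 + √(1 + s))`.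
-/

open MeasureTheory Set Real

section MixtureOfExponentials

variable {g : ℝ → ℝ}

lemma exp_neg_mul_mul_exp_neg_div_le {s x u : ℝ} (hx : 0 < x) (hu : u ∈ Ioo (0 : ℝ) 1) :
    exp (-(s * x)) * exp (-(x / u)) ≤ exp (-(1 + s) * x) := by
  rw [← exp_add, exp_le_exp]
  have : x ≤ x / u := le_div_self hx.le hu.1 hu.2.le
  linarith

lemma integrable_exp_neg_mul_mul_exp_neg_div (hg : IntegrableOn g (Ioo 0 1)) {s : ℝ}
    (hs : -1 < s) :
    Integrable (fun p : ℝ × ℝ => exp (-(s * p.1)) * (g p.2 * exp (-(p.1 / p.2))))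
      ((volume.restrict (Ioi 0)).prod (volume.restrict (Ioo 0 1))) := by
  have hdom : Integrable (fun p : ℝ × ℝ => exp (-(1 + s) * p.1) * ‖g p.2‖)
      ((volume.restrict (Ioi 0)).prod (volume.restrict (Ioo 0 1))) :=
    (exp_neg_integrableOn_Ioi 0 (by linarith)).mul_prod hg.norm
  refine hdom.mono' ?_ ?_
  · exact (by fun_prop : Measurable fun p : ℝ × ℝ => exp (-(s * p.1))).aestronglyMeasurable.mul
      (hg.aestronglyMeasurable.comp_snd.mul (by fun_prop : Measurable fun p : ℝ × ℝ =>
        exp (-(p.1 / p.2))).aestronglyMeasurable)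
  · rw [Measure.prod_restrict]
    filter_upwards [ae_restrict_mem (measurableSet_Ioi.prod measurableSet_Ioo)]
      with ⟨x, u⟩ ⟨hx, hu⟩
    rw [norm_mul, norm_mul, Real.norm_of_nonneg (exp_pos _).le, Real.norm_of_nonneg (exp_pos _).le,
      mul_left_comm]
    exact (mul_le_mul_of_nonneg_left (exp_neg_mul_mul_exp_neg_div_le hx hu)
      (norm_nonneg (g u))).trans_eq (mul_comm _ _)

lemma integral_exp_neg_mul_mul_exp_neg_div {s u : ℝ} (hs : -1 < s) (hu : u ∈ Ioo (0 : ℝ) 1) :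
    ∫ x in Ioi 0, exp (-(s * x)) * exp (-(x / u)) = u / (1 + s * u) := by
  have hsu : 0 < s + u⁻¹ := by
    have : 1 < u⁻¹ := one_lt_inv_iff₀.mpr hu
    linarith
  have hexp : ∀ x, exp (-(s * x)) * exp (-(x / u)) = exp (-(s + u⁻¹) * x) := fun x => by
    rw [← exp_add]
    ring_nf
  simp_rw [hexp]
  rw [integral_exp_mul_Ioi (by linarith) 0, mul_zero, exp_zero]
  have hu0 : u ≠ 0 := hu.1.ne'
  field_simp
  ring

theorem integrableOn_integral_mul_exp_neg_div (hg : IntegrableOn g (Ioo 0 1)) :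
    IntegrableOn (fun x => ∫ u in Ioo 0 1, g u * exp (-(x / u))) (Ioi 0) := by
  have := (integrable_exp_neg_mul_mul_exp_neg_div hg neg_one_lt_zero).integral_prod_left
  simp only [zero_mul, neg_zero, exp_zero, one_mul] at this
  exact this

theorem integral_exp_neg_mul_mul_integral_mul_exp_neg_div (hg : IntegrableOn g (Ioo 0 1))
    {s : ℝ} (hs : -1 < s) :
    ∫ x in Ioi 0, exp (-(s * x)) * ∫ u in Ioo 0 1, g u * exp (-(x / u))
      = ∫ u in Ioo 0 1, g u * (u / (1 + s * u)) := by
  simp_rw [← integral_const_mul]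
  rw [integral_integral_swap (integrable_exp_neg_mul_mul_exp_neg_div hg hs)]
  refine setIntegral_congr_fun measurableSet_Ioo fun u hu => ?_
  simp_rw [mul_left_comm _ (g u), integral_const_mul, integral_exp_neg_mul_mul_exp_neg_div hs hu]

end MixtureOfExponentials

lemma integral_Ioo_exp_neg_mul {x l : ℝ} (hx : x ≠ 0) (hl : 0 ≤ l) :
    ∫ s in Ioo 0 l, exp (-(s * x)) = (1 - exp (-(l * x))) * (1 / x) := by
  rw [← integral_Ioc_eq_integral_Ioo, ← intervalIntegral.integral_of_le hl,
    intervalIntegral.integral_comp_mul_right (fun y => exp (-y)) hx,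
    intervalIntegral.integral_comp_neg, integral_exp]
  simp only [zero_mul, neg_zero, exp_zero, smul_eq_mul]
  field_simp

theorem integral_one_sub_exp_neg_mul_div_mul {f : ℝ → ℝ} (hf : IntegrableOn f (Ioi 0))
    {l : ℝ} (hl : 0 ≤ l) :
    ∫ x in Ioi 0, (1 - exp (-(l * x))) * (1 / x) * f x
      = ∫ s in Ioo 0 l, ∫ x in Ioi 0, exp (-(s * x)) * f x := by
  have hint : Integrable (fun p : ℝ × ℝ => exp (-(p.2 * p.1)) * f p.1)
      ((volume.restrict (Ioi 0)).prod (volume.restrict (Ioo 0 l))) := by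
    refine (hf.norm.mul_prod (integrableOn_const (C := (1 : ℝ)) measure_Ioo_lt_top.ne)).mono' ?_ ?_
    · exact (by fun_prop : Measurable fun p : ℝ × ℝ => exp (-(p.2 * p.1))).aestronglyMeasurable.mul
        hf.aestronglyMeasurable.comp_fst
    · rw [Measure.prod_restrict]
      filter_upwards [ae_restrict_mem (measurableSet_Ioi.prod measurableSet_Ioo)]
        with ⟨x, s⟩ ⟨hx, hs⟩
      rw [norm_mul, Real.norm_of_nonneg (exp_pos _).le, mul_one, mul_comm]
      refine mul_le_of_le_one_right (norm_nonneg (f x)) (exp_le_one_iff.mpr ?_)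
      nlinarith [hx.out, hs.1]
  rw [← integral_integral_swap hint]
  refine setIntegral_congr_fun measurableSet_Ioi fun x hx => ?_
  rw [integral_mul_const, integral_Ioo_exp_neg_mul (ne_of_gt hx) hl]

lemma hasDerivAt_two_mul_log_sqrt_one_add_add_one {s : ℝ} (hs : -1 < s) (hs0 : s ≠ 0) :
    HasDerivAt (fun s => 2 * log (√(1 + s) + 1)) ((1 - (√(1 + s))⁻¹) / s) s := by
  have h1s : 0 < 1 + s := by linarith
  have hr2 : √(1 + s) ^ 2 = 1 + s := sq_sqrt h1s.le
  have hsqrt : HasDerivAt (fun s => √(1 + s) + 1) (1 / (2 * √(1 + s))) s := by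
    simpa using (((hasDerivAt_id s).const_add 1).sqrt h1s.ne').add_const 1
  refine ((hsqrt.log (by positivity)).const_mul 2).congr_deriv ?_
  have hr1 : √(1 + s) - 1 ≠ 0 := by
    intro h
    apply hs0
    nlinarith
  field_simp
  nlinarith

theorem integral_Ioo_one_sub_inv_sqrt_one_add_div {l : ℝ} (hl : 0 ≤ l) :
    ∫ s in Ioo 0 l, (1 - (√(1 + s))⁻¹) / s = 2 * (log (√(1 + l) + 1) - log 2) := by
  have hderiv : ∀ s ∈ Ioo 0 l, HasDerivAt (fun s => 2 * log (√(1 + s) + 1))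
      ((1 - (√(1 + s))⁻¹) / s) s := fun s hs =>
    hasDerivAt_two_mul_log_sqrt_one_add_add_one (by linarith [hs.1]) hs.1.ne'
  have hcont : ContinuousOn (fun s => 2 * log (√(1 + s) + 1)) (Icc 0 l) :=
    (continuous_const.mul (Continuous.log (by fun_prop) fun s => by positivity)).continuousOn
  have hnonneg : ∀ s ∈ Ioo 0 l, 0 ≤ (1 - (√(1 + s))⁻¹) / s := fun s hs => by
    refine div_nonneg (sub_nonneg.mpr (inv_le_one_of_one_le₀ ?_)) hs.1.le
    exact one_le_sqrt.mpr (by linarith [hs.1])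
  rw [← integral_Ioc_eq_integral_Ioo, ← intervalIntegral.integral_of_le hl,
    intervalIntegral.integral_eq_sub_of_hasDerivAt_of_le hl hcont hderiv
      ((intervalIntegrable_iff_integrableOn_Ioc_of_le hl).mpr
        (intervalIntegral.integrableOn_deriv_of_nonneg hcont hderiv hnonneg))]
  norm_num
  ring

noncomputable def arcsineDensity (u : ℝ) : ℝ := 1 / (π * √(u * (1 - u)))

lemma hasDerivAt_sq_div_one_add_sq (t : ℝ) :
    HasDerivAt (fun t : ℝ => t ^ 2 / (1 + t ^ 2)) (2 * t / (1 + t ^ 2) ^ 2) t := by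
  have hpos : 1 + t ^ 2 ≠ 0 := by positivity
  refine ((hasDerivAt_pow 2 t).fun_div ((hasDerivAt_pow 2 t).const_add 1) hpos).congr_deriv ?_
  field_simp
  ring

lemma injOn_sq_div_one_add_sq : InjOn (fun t : ℝ => t ^ 2 / (1 + t ^ 2)) (Ioi 0) := by
  intro a ha b hb hab
  have hsq : a ^ 2 = b ^ 2 := by
    field_simp at hab
    linarith
  exact (pow_left_inj₀ (le_of_lt ha) (le_of_lt hb) two_ne_zero).mp hsq

lemma image_sq_div_one_add_sq : (fun t : ℝ => t ^ 2 / (1 + t ^ 2)) '' Ioi 0 = Ioo 0 1 := by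
  ext v
  constructor
  · rintro ⟨t, ht, rfl⟩
    have ht : 0 < t := ht
    exact ⟨by positivity, (div_lt_one (by positivity)).mpr (by linarith)⟩
  · rintro ⟨hv0, hv1⟩
    have hw : 0 < v / (1 - v) := div_pos hv0 (by linarith)
    refine ⟨√(v / (1 - v)), sqrt_pos.mpr hw, ?_⟩
    have h1v : 1 - v ≠ 0 := by linarith
    simp only [sq_sqrt hw.le]
    field_simp
    ring

lemma arcsineDensity_sq_div_one_add_sq {t : ℝ} (ht : 0 < t) (c : ℝ) :
    |2 * t / (1 + t ^ 2) ^ 2| • (arcsineDensity (t ^ 2 / (1 + t ^ 2)) * c)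
      = 2 / π * (1 + t ^ 2)⁻¹ * c := by
  have hpos : 0 < 1 + t ^ 2 := by positivity
  have hsqrt : √(t ^ 2 / (1 + t ^ 2) * (1 - t ^ 2 / (1 + t ^ 2))) = t / (1 + t ^ 2) := by
    rw [← sqrt_sq (by positivity : 0 ≤ t / (1 + t ^ 2))]
    congr 1
    field_simp
    ring
  rw [smul_eq_mul, abs_of_pos (by positivity), arcsineDensity, hsqrt]
  field_simp

lemma integral_arcsineDensity_mul (h : ℝ → ℝ) :
    ∫ u in Ioo 0 1, arcsineDensity u * h u
      = ∫ t in Ioi 0, 2 / π * (1 + t ^ 2)⁻¹ * h (t ^ 2 / (1 + t ^ 2)) := by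
  rw [← image_sq_div_one_add_sq, integral_image_eq_integral_abs_deriv_smul measurableSet_Ioi
    (fun t _ => (hasDerivAt_sq_div_one_add_sq t).hasDerivWithinAt) injOn_sq_div_one_add_sq]
  exact setIntegral_congr_fun measurableSet_Ioi
    fun t ht => arcsineDensity_sq_div_one_add_sq ht _

lemma integrableOn_arcsineDensity_mul_iff (h : ℝ → ℝ) :
    IntegrableOn (fun u => arcsineDensity u * h u) (Ioo 0 1)
      ↔ IntegrableOn (fun t => 2 / π * (1 + t ^ 2)⁻¹ * h (t ^ 2 / (1 + t ^ 2))) (Ioi 0) := by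
  rw [← image_sq_div_one_add_sq, integrableOn_image_iff_integrableOn_abs_deriv_smul
    measurableSet_Ioi (fun t _ => (hasDerivAt_sq_div_one_add_sq t).hasDerivWithinAt)
    injOn_sq_div_one_add_sq]
  exact integrableOn_congr_fun (fun t ht => arcsineDensity_sq_div_one_add_sq ht _)
    measurableSet_Ioi

lemma integral_Ioi_inv_one_add_mul_sq {a : ℝ} (ha : 0 < a) :
    ∫ t in Ioi 0, (1 + a * t ^ 2)⁻¹ = π / (2 * √a) := by
  have hsa : 0 < √a := sqrt_pos.mpr ha
  have hrw : ∀ t : ℝ, 1 + a * t ^ 2 = 1 + (√a * t) ^ 2 := fun t => by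
    rw [mul_pow, sq_sqrt ha.le]
  simp_rw [hrw]
  rw [integral_comp_mul_left_Ioi (fun x => (1 + x ^ 2)⁻¹) 0 hsa, mul_zero,
    integral_Ioi_inv_one_add_sq, arctan_zero, sub_zero, smul_eq_mul]
  field_simp

lemma integrableOn_Ioi_inv_one_add_mul_sq {a : ℝ} (ha : 0 < a) :
    IntegrableOn (fun t : ℝ => (1 + a * t ^ 2)⁻¹) (Ioi 0) := by
  have hsa : 0 < √a := sqrt_pos.mpr ha
  have hrw : ∀ t : ℝ, 1 + a * t ^ 2 = 1 + (√a * t) ^ 2 := fun t => by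
    rw [mul_pow, sq_sqrt ha.le]
  simp_rw [hrw]
  exact (integrableOn_Ioi_comp_mul_left_iff (fun x => (1 + x ^ 2)⁻¹) 0 hsa).mpr
    integrable_inv_one_add_sq.integrableOn

lemma one_add_sq_inv_mul_one_add_mul_inv {s t : ℝ} (hs : -1 < s) :
    2 / π * (1 + t ^ 2)⁻¹ * (1 + s * (t ^ 2 / (1 + t ^ 2)))⁻¹
      = 2 / π * (1 + (1 + s) * t ^ 2)⁻¹ := by
  have hpos : 0 < 1 + t ^ 2 := by positivity
  have hpos' : 0 < 1 + (1 + s) * t ^ 2 := by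
    have : 0 < 1 + s := by linarith
    positivity
  field_simp
  ring

theorem integral_arcsineDensity_mul_inv_one_add_mul {s : ℝ} (hs : -1 < s) :
    ∫ u in Ioo 0 1, arcsineDensity u * (1 + s * u)⁻¹ = (√(1 + s))⁻¹ := by
  have h1s : 0 < 1 + s := by linarith
  rw [integral_arcsineDensity_mul]
  simp_rw [one_add_sq_inv_mul_one_add_mul_inv hs]
  rw [integral_const_mul, integral_Ioi_inv_one_add_mul_sq h1s]
  field_simp

theorem integrableOn_arcsineDensity_mul_inv_one_add_mul {s : ℝ} (hs : -1 < s) :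
    IntegrableOn (fun u => arcsineDensity u * (1 + s * u)⁻¹) (Ioo 0 1) := by
  rw [integrableOn_arcsineDensity_mul_iff]
  simp_rw [one_add_sq_inv_mul_one_add_mul_inv hs]
  exact (integrableOn_Ioi_inv_one_add_mul_sq (by linarith)).const_mul _

theorem integral_arcsineDensity : ∫ u in Ioo 0 1, arcsineDensity u = 1 := by
  simpa using integral_arcsineDensity_mul_inv_one_add_mul (s := 0) (by norm_num)

theorem integrableOn_arcsineDensity : IntegrableOn arcsineDensity (Ioo 0 1) := by
  simpa using integrableOn_arcsineDensity_mul_inv_one_add_mul (s := 0) (by norm_num)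

noncomputable def arcsineInvLaplace (x : ℝ) : ℝ :=
  ∫ u in Ioo 0 1, arcsineDensity u * exp (-(x / u))

theorem integral_exp_neg_mul_mul_arcsineInvLaplace {s : ℝ} (hs : -1 < s) (hs0 : s ≠ 0) :
    ∫ x in Ioi 0, exp (-(s * x)) * arcsineInvLaplace x = (1 - (√(1 + s))⁻¹) / s := by
  unfold arcsineInvLaplace
  rw [integral_exp_neg_mul_mul_integral_mul_exp_neg_div integrableOn_arcsineDensity hs]
  calc ∫ u in Ioo 0 1, arcsineDensity u * (u / (1 + s * u))
      = ∫ u in Ioo 0 1, s⁻¹ * (arcsineDensity u - arcsineDensity u * (1 + s * u)⁻¹) := by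
        refine setIntegral_congr_fun measurableSet_Ioo fun u hu => ?_
        have : 1 + u * s ≠ 0 := by nlinarith [hu.1, hu.2]
        field_simp
        ring
    _ = (1 - (√(1 + s))⁻¹) / s := by
        rw [integral_const_mul, integral_sub integrableOn_arcsineDensity
          (integrableOn_arcsineDensity_mul_inv_one_add_mul hs), integral_arcsineDensity,
          integral_arcsineDensity_mul_inv_one_add_mul hs, inv_mul_eq_div]

theorem integral_one_sub_exp_neg_mul_div_mul_arcsineInvLaplace {l : ℝ} (hl : 0 ≤ l) :
    ∫ x in Ioi 0, (1 - exp (-(l * x))) * (1 / x) * arcsineInvLaplace x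
      = 2 * (log (√(1 + l) + 1) - log 2) := by
  have hint : IntegrableOn arcsineInvLaplace (Ioi 0) :=
    integrableOn_integral_mul_exp_neg_div integrableOn_arcsineDensity
  rw [integral_one_sub_exp_neg_mul_div_mul hint hl,
    setIntegral_congr_fun measurableSet_Ioo fun s hs =>
      integral_exp_neg_mul_mul_arcsineInvLaplace (by linarith [hs.1]) hs.1.ne',
    integral_Ioo_one_sub_inv_sqrt_one_add_div hl]

theorem bernstein_inverse_arcsine :
    (∀ l : ℝ, 0 ≤ l →
      ∫ x in Ioi (0:ℝ), (1 - Real.exp (-(l * x))) * (1 / x) *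
          (∫ u in Ioo (0:ℝ) 1,
            (1 / (Real.pi * Real.sqrt (u * (1 - u)))) * Real.exp (-(x / u)))
        = 2 * (Real.log (Real.sqrt (1 + l) + 1) - Real.log 2)) ∧
    (∀ t : ℝ, 0 ≤ t → ∀ l : ℝ, 0 ≤ l →
      Real.exp (-(t * ∫ x in Ioi (0:ℝ), (1 - Real.exp (-(l * x))) * (1 / x) *
          (∫ u in Ioo (0:ℝ) 1,
            (1 / (Real.pi * Real.sqrt (u * (1 - u)))) * Real.exp (-(x / u)))))
        = (2 / (1 + Real.sqrt (1 + l))) ^ (2 * t)) := by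
  refine ⟨fun l hl => integral_one_sub_exp_neg_mul_div_mul_arcsineInvLaplace hl,
    fun t _ l hl => ?_⟩
  have key := integral_one_sub_exp_neg_mul_div_mul_arcsineInvLaplace hl
  unfold arcsineInvLaplace arcsineDensity at key
  have hpos : 0 < 1 + √(1 + l) := by positivity
  rw [key, rpow_def_of_pos (by positivity), log_div two_ne_zero hpos.ne', add_comm 1 (√(1 + l))]
  congr 1
  ring
end

section
/- For 0 < μ < 1, the function f(x) = (sin(πμ)/(πμ)) · 1/(x² + 2x cos(πμ) + 1) for x > 0 is a probability density on (0,∞), and its cumulative distribution function is F(x) = 1 − (1/(πμ)) arctan(sin(πμ)/(cos(πμ) + x)). -/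
/-! Completing the square, `t ^ 2 + 2 t cos θ + 1 = (cos θ + t) ^ 2 + sin θ ^ 2`, so
`arctan ((cos θ + t) / sin θ) / sin θ` is an antiderivative of the density with `θ = π μ`.
It equals `(π / 2 - θ) / sin θ` at `0` and tends to `(π / 2) / sin θ` at `∞`, and
`π / 2 - arctan ((cos θ + x) / sin θ)` is exactly the continuous branch of
`arctan (sin θ / (cos θ + x))`. -/

open MeasureTheory Set Real Filter

/-- The continuous branch in `(0, π)` of `arctan (s / (c + x))`. -/
noncomputable def arcBranch (c s x : ℝ) : ℝ :=
  if 0 < c + x then Real.arctan (s / (c + x))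
  else if c + x = 0 then Real.pi / 2
  else Real.pi + Real.arctan (s / (c + x))

lemma arcBranch_eq_pi_div_two_sub_arctan {c s : ℝ} (hs : 0 < s) (x : ℝ) :
    arcBranch c s x = π / 2 - arctan ((c + x) / s) := by
  have hinv : s / (c + x) = ((c + x) / s)⁻¹ := (inv_div _ _).symm
  unfold arcBranch
  rcases lt_trichotomy 0 (c + x) with hpos | hzero | hneg
  · rw [if_pos hpos, hinv, arctan_inv_of_pos (div_pos hpos hs)]
  · rw [if_neg hzero.ge.not_gt, if_pos hzero.symm, ← hzero, zero_div, arctan_zero, sub_zero]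
  · rw [if_neg hneg.not_gt, if_neg hneg.ne, hinv, arctan_inv_of_neg (div_neg_of_neg_of_pos hneg hs)]
    ring

lemma arctan_cos_div_sin {θ : ℝ} (h0 : 0 < θ) (hπ : θ < π) :
    arctan (cos θ / sin θ) = π / 2 - θ := by
  rw [← inv_div, ← tan_eq_sin_div_cos, ← tan_pi_div_two_sub,
    arctan_tan (by linarith) (by linarith)]

section InverseQuadratic

variable {θ : ℝ}

lemma sq_add_two_mul_cos_add_one_eq (θ t : ℝ) :
    t ^ 2 + 2 * t * cos θ + 1 = (cos θ + t) ^ 2 + sin θ ^ 2 := by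
  linear_combination -sin_sq_add_cos_sq θ

lemma sq_add_two_mul_cos_add_one_pos (hs : sin θ ≠ 0) (t : ℝ) :
    0 < t ^ 2 + 2 * t * cos θ + 1 := by
  rw [sq_add_two_mul_cos_add_one_eq]
  positivity

lemma hasDerivAt_arctan_cos_add_div_sin (hs : sin θ ≠ 0) (t : ℝ) :
    HasDerivAt (fun t ↦ arctan ((cos θ + t) / sin θ) / sin θ)
      (1 / (t ^ 2 + 2 * t * cos θ + 1)) t := by
  have hlin : HasDerivAt (fun t ↦ (cos θ + t) / sin θ) (1 / sin θ) t := by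
    simpa using ((hasDerivAt_id t).const_add (cos θ)).div_const (sin θ)
  refine (((hasDerivAt_arctan _).comp t hlin).div_const (sin θ)).congr_deriv ?_
  rw [sq_add_two_mul_cos_add_one_eq]
  field_simp
  ring

lemma integral_Ioo_one_div_sq_add_two_mul_cos_add_one (h0 : 0 < θ) (hπ : θ < π)
    {x : ℝ} (hx : 0 ≤ x) :
    ∫ t in Ioo 0 x, 1 / (t ^ 2 + 2 * t * cos θ + 1)
      = (θ - arcBranch (cos θ) (sin θ) x) / sin θ := by
  have hs : 0 < sin θ := sin_pos_of_pos_of_lt_pi h0 hπ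
  have hcont : Continuous fun t : ℝ ↦ 1 / (t ^ 2 + 2 * t * cos θ + 1) :=
    continuous_const.div (by fun_prop) fun t ↦ (sq_add_two_mul_cos_add_one_pos hs.ne' t).ne'
  rw [← integral_Ioc_eq_integral_Ioo, ← intervalIntegral.integral_of_le hx,
    intervalIntegral.integral_eq_sub_of_hasDerivAt
      (fun t _ ↦ hasDerivAt_arctan_cos_add_div_sin hs.ne' t) (hcont.intervalIntegrable 0 x),
    arcBranch_eq_pi_div_two_sub_arctan hs, add_zero, arctan_cos_div_sin h0 hπ]
  ring

lemma integral_Ioi_one_div_sq_add_two_mul_cos_add_one (h0 : 0 < θ) (hπ : θ < π) :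
    ∫ t in Ioi 0, 1 / (t ^ 2 + 2 * t * cos θ + 1) = θ / sin θ := by
  have hs : 0 < sin θ := sin_pos_of_pos_of_lt_pi h0 hπ
  have hlim : Tendsto (fun t ↦ arctan ((cos θ + t) / sin θ) / sin θ) atTop
      (nhds (π / 2 / sin θ)) :=
    ((tendsto_arctan_atTop.mono_right nhdsWithin_le_nhds).comp
      ((tendsto_atTop_add_const_left _ _ tendsto_id).atTop_div_const hs)).div_const _
  rw [integral_Ioi_of_hasDerivAt_of_nonneg (by fun_prop)
      (fun t _ ↦ hasDerivAt_arctan_cos_add_div_sin hs.ne' t)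
      (fun t _ ↦ (one_div_pos.2 (sq_add_two_mul_cos_add_one_pos hs.ne' t)).le) hlim,
    add_zero, arctan_cos_div_sin h0 hπ]
  ring

end InverseQuadratic

theorem density_Z_mu (μ : ℝ) (hμ0 : 0 < μ) (hμ1 : μ < 1) :
    (∫ x in Ioi (0:ℝ),
        (Real.sin (Real.pi * μ) / (Real.pi * μ)) *
          (1 / (x ^ 2 + 2 * x * Real.cos (Real.pi * μ) + 1)) = 1) ∧
    (∀ x : ℝ, 0 ≤ x →
      ∫ y in Ioo (0:ℝ) x,
          (Real.sin (Real.pi * μ) / (Real.pi * μ)) *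
            (1 / (y ^ 2 + 2 * y * Real.cos (Real.pi * μ) + 1))
        = 1 - (1 / (Real.pi * μ)) *
            arcBranch (Real.cos (Real.pi * μ)) (Real.sin (Real.pi * μ)) x) := by
  have h0 : 0 < π * μ := by positivity
  have hπ : π * μ < π := mul_lt_of_lt_one_right pi_pos hμ1
  have hs : sin (π * μ) ≠ 0 := (sin_pos_of_pos_of_lt_pi h0 hπ).ne'
  refine ⟨?_, fun x hx ↦ ?_⟩
  · rw [integral_const_mul, integral_Ioi_one_div_sq_add_two_mul_cos_add_one h0 hπ]
    field_simp
  · rw [integral_const_mul, integral_Ioo_one_div_sq_add_two_mul_cos_add_one h0 hπ hx]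
    field_simp
end

section
/- Let σ(x) = (ax+b)/(cx+d) with a,b,c,d ≥ 0, ad − bc = ±1, and let G be a positive random variable such that σ(G) > 0 a.s. and all logs below are integrable. Define σ̃(λ) = (dλ+b)/(cλ+a) and ψ_X(λ) = E[log(1 + λ/X)]. Then for all λ > 0: −ψ_G(σ̃(λ)) + ψ_{σ(G)}(λ) = log(cλ + a) + E[log(G/(aG + b))]. -/
/-!
With `N = (c l + a) G + (d l + b)` both logarithms have the same numerator:
`1 + l / σ(G) = N / (a G + b)` and `1 + σ̃(l) / G = N / ((c l + a) G)`. So the difference of the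
two integrands is `log (c l + a) + log (G / (a G + b))` pointwise, and the only analytic input is
that `ψ_X(s)` is finite once `log X` is integrable, which follows from
`|log (x + y)| ≤ log 2 + |log x| + |log y|`.
-/

open MeasureTheory Real

namespace Real

lemma abs_log_add_le {x y : ℝ} (hx : 0 < x) (hy : 0 ≤ y) :
    |log (x + y)| ≤ log 2 + |log x| + |log y| := by
  have posLog_le_abs_log : ∀ z, log⁺ z ≤ |log z| := fun z => max_le (abs_nonneg _) (le_abs_self _)
  rw [abs_le]
  constructor
  · have := log_le_log hx (le_add_of_nonneg_right hy)
    linarith [neg_abs_le (log x), abs_nonneg (log y), log_nonneg one_le_two]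
  · calc log (x + y) ≤ log⁺ (x + y) := le_max_right _ _
      _ ≤ log 2 + log⁺ x + log⁺ y := posLog_add
      _ ≤ log 2 + |log x| + |log y| := by gcongr <;> exact posLog_le_abs_log _

lemma log_one_add_div_mobius_sub {a b c d x l : ℝ} (hx : 0 < x) (hcl : 0 < c * l + a)
    (hdl : 0 ≤ d * l + b) (hax : a * x + b ≠ 0) :
    log (1 + l / ((a * x + b) / (c * x + d))) - log (1 + ((d * l + b) / (c * l + a)) / x)
      = log (c * l + a) + log (x / (a * x + b)) := by
  have hN : 0 < (c * l + a) * x + (d * l + b) := by positivity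
  have h1 : 1 + l / ((a * x + b) / (c * x + d))
      = ((c * l + a) * x + (d * l + b)) / (a * x + b) := by
    rw [div_div_eq_mul_div, eq_div_iff hax, add_mul, one_mul, div_mul_cancel₀ _ hax]
    ring
  have h2 : 1 + ((d * l + b) / (c * l + a)) / x
      = ((c * l + a) * x + (d * l + b)) / ((c * l + a) * x) := by
    have hclx := (mul_pos hcl hx).ne'
    rw [div_div, eq_div_iff hclx, add_mul, one_mul, div_mul_cancel₀ _ hclx]
  rw [h1, h2, log_div hN.ne' hax, log_div hN.ne' (by positivity), log_mul hcl.ne' hx.ne',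
    log_div hx.ne' hax]
  ring

end Real

section LogMoments

variable {Ω : Type*} [MeasurableSpace Ω] {μ : Measure Ω} [IsFiniteMeasure μ] {X : Ω → ℝ}

lemma integrable_log_add_const (hX : ∀ ω, 0 < X ω) (hlog : Integrable (fun ω => log (X ω)) μ)
    {s : ℝ} (hs : 0 ≤ s) : Integrable (fun ω => log (X ω + s)) μ := by
  have hmeas : AEStronglyMeasurable (fun ω => log (X ω + s)) μ := by
    have : Measurable fun t : ℝ => log (exp t + s) := by fun_prop
    simpa only [Function.comp_def, exp_log, hX] using
      (this.comp_aemeasurable hlog.aemeasurable).aestronglyMeasurable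
  refine Integrable.mono' ((integrable_const (log 2 + |log s|)).add hlog.abs) hmeas
    (ae_of_all _ fun ω => ?_)
  rw [norm_eq_abs, Pi.add_apply]
  linarith [abs_log_add_le (hX ω) hs]

lemma integrable_log_one_add_div (hX : ∀ ω, 0 < X ω) (hlog : Integrable (fun ω => log (X ω)) μ)
    {s : ℝ} (hs : 0 ≤ s) : Integrable (fun ω => log (1 + s / X ω)) μ := by
  refine ((integrable_log_add_const hX hlog hs).sub hlog).congr (ae_of_all _ fun ω => ?_)
  have hXω := hX ω
  rw [Pi.sub_apply, ← log_div (by positivity) hXω.ne', add_div, div_self hXω.ne']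

end LogMoments

theorem duality_bernstein_mobius_general {Ω : Type*} [MeasurableSpace Ω] (μ : Measure Ω)
    [IsProbabilityMeasure μ] (a b c d : ℝ) (ha : 0 ≤ a) (hb : 0 ≤ b)
    (hc : 0 ≤ c) (hd : 0 ≤ d) (hdet : a * d - b * c = 1 ∨ a * d - b * c = -1)
    (G : Ω → ℝ) (hG_pos : ∀ ω, 0 < G ω)
    (hσ_pos : ∀ ω, 0 < (a * G ω + b) / (c * G ω + d))
    (hG_int : Integrable (fun ω => Real.log (G ω)) μ)
    (hab_int : Integrable (fun ω => Real.log (a * G ω + b)) μ)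
    (hcd_int : Integrable (fun ω => Real.log (c * G ω + d)) μ) :
    ∀ l : ℝ, 0 < l →
      -(∫ ω, Real.log (1 + ((d * l + b) / (c * l + a)) / G ω) ∂μ) +
          (∫ ω, Real.log (1 + l / ((a * G ω + b) / (c * G ω + d))) ∂μ)
        = Real.log (c * l + a) + ∫ ω, Real.log (G ω / (a * G ω + b)) ∂μ := by
  intro l hl
  have hcl : 0 < c * l + a := by
    rcases ha.eq_or_lt with rfl | _
    · have hc_pos : 0 < c := hc.lt_of_ne (by rintro rfl; simp at hdet)
      positivity
    · positivity
  have hnum : ∀ ω, a * G ω + b ≠ 0 := fun ω => (div_ne_zero_iff.mp (hσ_pos ω).ne').1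
  have hden : ∀ ω, c * G ω + d ≠ 0 := fun ω => (div_ne_zero_iff.mp (hσ_pos ω).ne').2
  have hσ_int : Integrable (fun ω => log ((a * G ω + b) / (c * G ω + d))) μ :=
    (hab_int.sub hcd_int).congr (ae_of_all _ fun ω => (log_div (hnum ω) (hden ω)).symm)
  have hratio_int : Integrable (fun ω => log (G ω / (a * G ω + b))) μ :=
    (hG_int.sub hab_int).congr (ae_of_all _ fun ω => (log_div (hG_pos ω).ne' (hnum ω)).symm)
  rw [neg_add_eq_sub, ← integral_sub (integrable_log_one_add_div hσ_pos hσ_int hl.le)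
    (integrable_log_one_add_div hG_pos hG_int (by positivity))]
  calc _ = ∫ ω, (log (c * l + a) + log (G ω / (a * G ω + b))) ∂μ :=
        integral_congr_ae (ae_of_all _ fun ω =>
          log_one_add_div_mobius_sub (hG_pos ω) hcl (by positivity) (hnum ω))
    _ = _ := by rw [integral_add (integrable_const _) hratio_int]; simp

theorem duality_bernstein_mobius {Ω : Type*} [MeasurableSpace Ω] (μ : Measure Ω)
    [IsProbabilityMeasure μ] (a b c d : ℝ) (ha : 0 ≤ a) (hb : 0 ≤ b)
    (hc : 0 ≤ c) (hd : 0 ≤ d) (hdet : a * d - b * c = 1 ∨ a * d - b * c = -1)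
    (G : Ω → ℝ) (hG_meas : Measurable G) (hG_pos : ∀ ω, 0 < G ω)
    (hσ_pos : ∀ ω, 0 < (a * G ω + b) / (c * G ω + d))
    (hG_int : Integrable (fun ω => Real.log (G ω)) μ)
    (hab_int : Integrable (fun ω => Real.log (a * G ω + b)) μ)
    (hcd_int : Integrable (fun ω => Real.log (c * G ω + d)) μ) :
    ∀ l : ℝ, 0 < l →
      -(∫ ω, Real.log (1 + ((d * l + b) / (c * l + a)) / G ω) ∂μ) +
          (∫ ω, Real.log (1 + l / ((a * G ω + b) / (c * G ω + d))) ∂μ)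
        = Real.log (c * l + a) + ∫ ω, Real.log (G ω / (a * G ω + b)) ∂μ :=
  duality_bernstein_mobius_general μ a b c d ha hb hc hd hdet G hG_pos hσ_pos hG_int hab_int hcd_int
end

section
/- Let G be positive with E|log G| < ∞, t > 0, and suppose the (t,G)-GGC variable Γ_t(1/G) has density f on (0,∞) while Γ_t(G) = γ_t · D_t(G) with γ_t Gamma(t) independent of the positive random variable D_t(G). Then f(x) = (x^{t−1}/Γ(t)) e^{−t E[log G]} E[e^{−x D_t(G)}] for all x > 0. -/
/-!
Mixing the Gamma density `x ^ (t - 1) e^{-l x} / Γ(t)` over the Laplace transform of `D` and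
swapping the integrals turns the left side into `E[(l + D)^(-t)] = l^(-t) E[(1 + l⁻¹ D)^(-t)]`,
which the characterisation of `D` evaluates at `l⁻¹`. The factorisation
`1 + l G = l G (1 + l⁻¹ / G)` then gives the duality
`E log (1 + l G) = log l + E log G + E log (1 + l⁻¹ / G)`, which matches the two sides.
-/

open MeasureTheory Set Real

lemma Real.log_one_add_le_log_two_add_abs_log {x : ℝ} (hx : 0 < x) :
    log (1 + x) ≤ log 2 + |log x| := by
  have h_one : 1 ≤ exp |log x| := one_le_exp (abs_nonneg _)
  have h_x : x ≤ exp |log x| := by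
    calc x = exp (log x) := (exp_log hx).symm
      _ ≤ exp |log x| := exp_le_exp.2 (le_abs_self _)
  calc log (1 + x) ≤ log (2 * exp |log x|) := log_le_log (by linarith) (by linarith)
    _ = log 2 + |log x| := by rw [log_mul two_ne_zero (exp_ne_zero _), log_exp]

section

variable {Ω : Type*} [MeasurableSpace Ω] {μ : Measure Ω}

lemma integrable_log_one_add [IsFiniteMeasure μ] {X : Ω → ℝ} (hX_meas : Measurable X)
    (hX_pos : ∀ ω, 0 < X ω) (hX_log : Integrable (fun ω => log (X ω)) μ) :
    Integrable (fun ω => log (1 + X ω)) μ := by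
  refine Integrable.mono' ((integrable_const (log 2)).add hX_log.abs)
    (measurable_const.add hX_meas).log.aestronglyMeasurable (Filter.Eventually.of_forall ?_)
  intro ω
  have h_nonneg : 0 ≤ log (1 + X ω) := log_nonneg (by linarith [hX_pos ω])
  rw [norm_of_nonneg h_nonneg]
  exact log_one_add_le_log_two_add_abs_log (hX_pos ω)

lemma integral_log_one_add_mul [IsProbabilityMeasure μ] {G : Ω → ℝ} (hG_meas : Measurable G)
    (hG_pos : ∀ ω, 0 < G ω) (hG_log : Integrable (fun ω => log (G ω)) μ) {l : ℝ} (hl : 0 < l) :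
    ∫ ω, log (1 + l * G ω) ∂μ
      = log l + ∫ ω, log (G ω) ∂μ + ∫ ω, log (1 + l⁻¹ / G ω) ∂μ := by
  have h_dual_log : Integrable (fun ω => log (l⁻¹ / G ω)) μ := by
    refine ((integrable_const (-log l)).sub hG_log).congr (Filter.Eventually.of_forall ?_)
    intro ω
    simp only [Pi.sub_apply, log_div (inv_ne_zero hl.ne') (hG_pos ω).ne', log_inv]
  have h_dual : Integrable (fun ω => log (1 + l⁻¹ / G ω)) μ :=
    integrable_log_one_add (measurable_const.div hG_meas)
      (fun ω => div_pos (inv_pos.2 hl) (hG_pos ω)) h_dual_log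
  have h_factor : ∀ ω, log (1 + l * G ω) = (log l + log (G ω)) + log (1 + l⁻¹ / G ω) := by
    intro ω
    have hG := hG_pos ω
    have h_eq : 1 + l * G ω = l * G ω * (1 + l⁻¹ / G ω) := by field_simp; ring
    rw [h_eq, log_mul (by positivity) (by positivity), log_mul hl.ne' hG.ne']
  have h_sum : Integrable (fun ω => log l + log (G ω)) μ := (integrable_const _).add hG_log
  simp_rw [h_factor]
  rw [integral_add h_sum h_dual, integral_add (integrable_const _) hG_log, integral_const]
  simp

lemma integral_rpow_add_eq_rpow_mul_integral {D : Ω → ℝ} (hD_nonneg : ∀ ω, 0 ≤ D ω)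
    {l : ℝ} (hl : 0 < l) (s : ℝ) :
    ∫ ω, (l + D ω) ^ s ∂μ = l ^ s * ∫ ω, (1 + l⁻¹ * D ω) ^ s ∂μ := by
  rw [← integral_const_mul]
  congr 1 with ω
  have h_eq : l + D ω = l * (1 + l⁻¹ * D ω) := by field_simp
  rw [h_eq, mul_rpow hl.le (by have := hD_nonneg ω; positivity)]

lemma integrable_rpow_mul_exp_neg_add_mul_prod [IsFiniteMeasure μ] {D : Ω → ℝ}
    (hD_meas : Measurable D) (hD_nonneg : ∀ ω, 0 ≤ D ω) {t l : ℝ} (ht : 0 < t) (hl : 0 < l) :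
    Integrable (fun z : ℝ × Ω => z.1 ^ (t - 1) * exp (-((l + D z.2) * z.1)))
      ((volume.restrict (Ioi 0)).prod μ) := by
  have h_dom : IntegrableOn (fun x : ℝ => x ^ (t - 1) * exp (-(l * x))) (Ioi 0) := by
    simpa [rpow_one] using
      integrableOn_rpow_mul_exp_neg_mul_rpow (s := t - 1) (by linarith) zero_lt_one hl
  have h_pos : ∀ᵐ z : ℝ × Ω ∂(volume.restrict (Ioi 0)).prod μ, 0 < z.1 :=
    Measure.quasiMeasurePreserving_fst.ae (ae_restrict_mem measurableSet_Ioi)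
  refine (h_dom.mul_prod (integrable_const (1 : ℝ))).mono' (by fun_prop) ?_
  filter_upwards [h_pos] with z hz
  have h_rpow : 0 ≤ z.1 ^ (t - 1) := (rpow_pos_of_pos hz _).le
  rw [norm_of_nonneg (by positivity), mul_one]
  gcongr
  nlinarith [hD_nonneg z.2]

lemma setIntegral_exp_neg_mul_gamma_mixture [IsFiniteMeasure μ] {D : Ω → ℝ}
    (hD_meas : Measurable D) (hD_nonneg : ∀ ω, 0 ≤ D ω) {t l : ℝ} (ht : 0 < t) (hl : 0 < l) :
    ∫ x in Ioi 0, exp (-(l * x)) * (x ^ (t - 1) / Gamma t * ∫ ω, exp (-(x * D ω)) ∂μ)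
      = ∫ ω, (l + D ω) ^ (-t) ∂μ := by
  have h_gamma : ∀ ω, ∫ x in Ioi 0, x ^ (t - 1) * exp (-((l + D ω) * x))
      = Gamma t * (l + D ω) ^ (-t) := by
    intro ω
    have h_pos : 0 < l + D ω := by linarith [hD_nonneg ω]
    rw [integral_rpow_mul_exp_neg_mul_Ioi ht h_pos, one_div, inv_rpow h_pos.le,
      ← rpow_neg h_pos.le, mul_comm]
  calc ∫ x in Ioi 0, exp (-(l * x)) * (x ^ (t - 1) / Gamma t * ∫ ω, exp (-(x * D ω)) ∂μ)
      = (Gamma t)⁻¹ * ∫ x in Ioi 0, ∫ ω, x ^ (t - 1) * exp (-((l + D ω) * x)) ∂μ := by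
        rw [← integral_const_mul]
        congr 1 with x
        have h_split : ∀ ω, x ^ (t - 1) * exp (-((l + D ω) * x))
            = x ^ (t - 1) * exp (-(l * x)) * exp (-(x * D ω)) := by
          intro ω
          rw [mul_assoc, ← exp_add]
          ring_nf
        simp_rw [h_split, integral_const_mul]
        ring
    _ = (Gamma t)⁻¹ * ∫ ω, (∫ x in Ioi 0, x ^ (t - 1) * exp (-((l + D ω) * x))) ∂μ := by
        rw [integral_integral_swap
          (integrable_rpow_mul_exp_neg_add_mul_prod hD_meas hD_nonneg ht hl)]
    _ = ∫ ω, (l + D ω) ^ (-t) ∂μ := by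
        simp_rw [h_gamma, integral_const_mul, ← mul_assoc, inv_mul_cancel₀ (Gamma_pos_of_pos ht).ne',
          one_mul]

end

theorem density_duality_laplace {Ω : Type*} [MeasurableSpace Ω] (μ : Measure Ω)
    [IsProbabilityMeasure μ] (t : ℝ) (ht : 0 < t)
    (G D : Ω → ℝ) (hG_meas : Measurable G) (hD_meas : Measurable D)
    (hG_pos : ∀ ω, 0 < G ω) (hD_pos : ∀ ω, 0 < D ω)
    (hG_int : Integrable (fun ω => Real.log (G ω)) μ)
    (hD_char : ∀ l : ℝ, 0 ≤ l →
      (∫ ω, (1 + l * D ω) ^ (-t) ∂μ)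
        = Real.exp (-(t * ∫ ω, Real.log (1 + l / G ω) ∂μ))) :
    ∀ l : ℝ, 0 < l →
      (∫ x in Ioi (0:ℝ), Real.exp (-(l * x)) *
          (x ^ (t - 1) / Real.Gamma t *
            Real.exp (-(t * ∫ ω, Real.log (G ω) ∂μ)) *
            ∫ ω, Real.exp (-(x * D ω)) ∂μ))
        = Real.exp (-(t * ∫ ω, Real.log (1 + l * G ω) ∂μ)) := by
  intro l hl
  have hD_nonneg : ∀ ω, 0 ≤ D ω := fun ω => (hD_pos ω).le
  set C := exp (-(t * ∫ ω, log (G ω) ∂μ))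
  calc ∫ x in Ioi 0, exp (-(l * x)) *
          (x ^ (t - 1) / Gamma t * C * ∫ ω, exp (-(x * D ω)) ∂μ)
      = C * ∫ x in Ioi 0, exp (-(l * x)) *
          (x ^ (t - 1) / Gamma t * ∫ ω, exp (-(x * D ω)) ∂μ) := by
        rw [← integral_const_mul]
        congr 1 with x
        ring
    _ = C * (l ^ (-t) * exp (-(t * ∫ ω, log (1 + l⁻¹ / G ω) ∂μ))) := by
        rw [setIntegral_exp_neg_mul_gamma_mixture hD_meas hD_nonneg ht hl,
          integral_rpow_add_eq_rpow_mul_integral hD_nonneg hl, hD_char l⁻¹ (inv_nonneg.2 hl.le)]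
    _ = exp (-(t * ∫ ω, log (1 + l * G ω) ∂μ)) := by
        rw [integral_log_one_add_mul hG_meas hG_pos hG_int hl, rpow_def_of_pos hl, ← exp_add,
          ← exp_add]
        congr 1
        ring
end

section
/- Let G be positive with E|log G| < ∞, t > 0, and let D_t(G) be the Dirichlet mean satisfying E[(1 + λ D_t(G))^{−t}] = exp(−t E[log(1 + λ/G)]) for λ ≥ 0. Then E[(D_t(G))^{−t}] = e^{t E[log G]}, and more generally E[(λ + D_t(G))^{−t}] = exp(−t(ψ_{1/G}(λ) − E[log G])) for λ ≥ 0, where ψ_{1/G}(λ) = E[log(1+λG)]. -/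
/-! Writing `(l + D)^(-t) = l^(-t) (1 + l⁻¹ D)^(-t)` and using the duality
`log (1 + l⁻¹ / G) = log (1 + l G) - log l - log G`, the defining identity of `D` becomes the
second claim for `l > 0`. The first claim is its limit as `l ↓ 0`: monotone convergence on the
left, and dominated convergence on the right, where `log (1 + l G)` is dominated by `log (1 + G)`.
-/

open MeasureTheory Set Real Filter Topology

theorem log_one_add_mul_le {c h : ℝ} (hc : 0 ≤ c) (hh : 0 < h) :
    log (1 + c * h) ≤ log (2 * (1 + c)) + |log h| := by
  rcases le_or_gt h 1 with h1 | h1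
  · calc log (1 + c * h) ≤ log (2 * (1 + c)) := log_le_log (by positivity) (by nlinarith)
      _ ≤ log (2 * (1 + c)) + |log h| := le_add_of_nonneg_right (abs_nonneg _)
  · calc log (1 + c * h) ≤ log (2 * (1 + c) * h) := log_le_log (by positivity) (by nlinarith)
      _ = log (2 * (1 + c)) + log h := log_mul (by positivity) hh.ne'
      _ ≤ log (2 * (1 + c)) + |log h| := add_le_add_right (le_abs_self _) _

section

variable {Ω : Type*} [MeasurableSpace Ω] {μ : Measure Ω}

theorem integral_eq_of_tendsto_of_monotone {f : ℕ → Ω → ℝ} {F : Ω → ℝ} {c : ℝ}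
    (hf : ∀ n, Integrable (f n) μ) (hf_nonneg : ∀ n, 0 ≤ᵐ[μ] f n)
    (h_mono : ∀ᵐ ω ∂μ, Monotone fun n => f n ω)
    (h_tendsto : ∀ᵐ ω ∂μ, Tendsto (fun n => f n ω) atTop (𝓝 (F ω)))
    (h_int : Tendsto (fun n => ∫ ω, f n ω ∂μ) atTop (𝓝 c)) :
    ∫ ω, F ω ∂μ = c := by
  have hF_meas : AEStronglyMeasurable F μ :=
    aestronglyMeasurable_of_tendsto_ae _ (fun n => (hf n).1) h_tendsto
  have hF_nonneg : 0 ≤ᵐ[μ] F := by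
    filter_upwards [h_tendsto, hf_nonneg 0, h_mono] with ω hω h0 hm
    exact ge_of_tendsto' hω fun n => h0.trans (hm n.zero_le)
  have hc : 0 ≤ c := ge_of_tendsto' h_int fun n => integral_nonneg_of_ae (hf_nonneg n)
  have h_lint : Tendsto (fun n => ∫⁻ ω, ENNReal.ofReal (f n ω) ∂μ) atTop
      (𝓝 (∫⁻ ω, ENNReal.ofReal (F ω) ∂μ)) :=
    lintegral_tendsto_of_tendsto_of_monotone (fun n => (hf n).1.aemeasurable.ennreal_ofReal)
      (by filter_upwards [h_mono] with ω hm n m hnm using ENNReal.ofReal_le_ofReal (hm hnm))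
      (by filter_upwards [h_tendsto] with ω hω using ENNReal.tendsto_ofReal hω)
  have h_lint_eq : ∫⁻ ω, ENNReal.ofReal (F ω) ∂μ = ENNReal.ofReal c :=
    tendsto_nhds_unique h_lint <| (ENNReal.tendsto_ofReal h_int).congr fun n =>
      ofReal_integral_eq_lintegral_ofReal (hf n) (hf_nonneg n)
  rw [integral_eq_lintegral_of_nonneg_ae hF_nonneg hF_meas, h_lint_eq, ENNReal.toReal_ofReal hc]

section LogOneAddMul

variable [IsFiniteMeasure μ] {H : Ω → ℝ}

theorem integrable_log_one_add_mul (hH : Measurable H) (hH_pos : ∀ ω, 0 < H ω)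
    (h_log : Integrable (fun ω => log (H ω)) μ) {c : ℝ} (hc : 0 ≤ c) :
    Integrable (fun ω => log (1 + c * H ω)) μ := by
  refine Integrable.mono' ((integrable_const (log (2 * (1 + c)))).add h_log.abs)
    (measurable_const.add (hH.const_mul c)).log.aestronglyMeasurable (ae_of_all _ fun ω => ?_)
  have h_nonneg : 0 ≤ log (1 + c * H ω) :=
    log_nonneg (le_add_of_nonneg_right (mul_nonneg hc (hH_pos ω).le))
  rw [norm_of_nonneg h_nonneg]
  exact log_one_add_mul_le hc (hH_pos ω)

theorem tendsto_integral_log_one_add_mul_nhdsGE_zero (hH : Measurable H)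
    (hH_pos : ∀ ω, 0 < H ω) (h_log : Integrable (fun ω => log (H ω)) μ) :
    Tendsto (fun l => ∫ ω, log (1 + l * H ω) ∂μ) (𝓝[≥] 0) (𝓝 0) := by
  have h_lim : Tendsto (fun l => ∫ ω, log (1 + l * H ω) ∂μ) (𝓝[≥] 0)
      (𝓝 (∫ ω, log (1 + 0 * H ω) ∂μ)) := by
    refine tendsto_integral_filter_of_dominated_convergence (fun ω => log (1 + 1 * H ω))
      (Eventually.of_forall fun l =>
        (measurable_const.add (hH.const_mul l)).log.aestronglyMeasurable) ?_
      (integrable_log_one_add_mul hH hH_pos h_log zero_le_one) (ae_of_all _ fun ω => ?_)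
    · filter_upwards [Ico_mem_nhdsGE zero_lt_one] with l ⟨hl0, hl1⟩
      refine ae_of_all _ fun ω => ?_
      have hH := (hH_pos ω).le
      rw [norm_of_nonneg (log_nonneg (le_add_of_nonneg_right (mul_nonneg hl0 hH)))]
      exact log_le_log (by positivity) (by gcongr)
    · refine (ContinuousAt.tendsto ?_).mono_left nhdsWithin_le_nhds
      exact (continuousAt_const.add (continuousAt_id.mul continuousAt_const)).log (by simp)
  simpa using h_lim

end LogOneAddMul

section DirichletMean

variable [IsProbabilityMeasure μ] {t : ℝ} {G D : Ω → ℝ}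

theorem integral_log_one_add_inv_div (hG : Measurable G) (hG_pos : ∀ ω, 0 < G ω)
    (hG_log : Integrable (fun ω => log (G ω)) μ) {l : ℝ} (hl : 0 < l) :
    ∫ ω, log (1 + l⁻¹ / G ω) ∂μ
      = ∫ ω, log (1 + l * G ω) ∂μ - log l - ∫ ω, log (G ω) ∂μ := by
  have h_duality : ∀ ω, log (1 + l⁻¹ / G ω) = log (1 + l * G ω) - log l - log (G ω) := by
    intro ω
    have hg := hG_pos ω
    rw [show 1 + l⁻¹ / G ω = (1 + l * G ω) / (l * G ω) by field_simp; ring,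
      log_div (by positivity) (by positivity), log_mul hl.ne' hg.ne']
    ring
  have h_int := integrable_log_one_add_mul (μ := μ) hG hG_pos hG_log hl.le
  simp_rw [h_duality]
  rw [integral_sub (f := fun ω => log (1 + l * G ω) - log l) (h_int.sub (integrable_const _))
      hG_log,
    integral_sub h_int (integrable_const _), integral_const, probReal_univ, one_smul]

theorem integral_add_rpow_neg (hG : Measurable G) (hG_pos : ∀ ω, 0 < G ω)
    (hG_log : Integrable (fun ω => log (G ω)) μ) (hD_pos : ∀ ω, 0 < D ω)
    (hD_char : ∀ l : ℝ, 0 ≤ l →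
      ∫ ω, (1 + l * D ω) ^ (-t) ∂μ = exp (-(t * ∫ ω, log (1 + l / G ω) ∂μ)))
    {l : ℝ} (hl : 0 < l) :
    ∫ ω, (l + D ω) ^ (-t) ∂μ
      = exp (-(t * (∫ ω, log (1 + l * G ω) ∂μ - ∫ ω, log (G ω) ∂μ))) := by
  have h_scale : ∀ ω, (l + D ω) ^ (-t) = l ^ (-t) * (1 + l⁻¹ * D ω) ^ (-t) := by
    intro ω
    have hd := hD_pos ω
    rw [← mul_rpow hl.le (by positivity)]
    congr 1
    field_simp
  simp_rw [h_scale]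
  rw [integral_const_mul, hD_char _ (inv_nonneg.2 hl.le),
    integral_log_one_add_inv_div hG hG_pos hG_log hl, rpow_def_of_pos hl, ← exp_add]
  ring_nf

theorem integral_rpow_neg (ht : 0 ≤ t) (hG : Measurable G) (hG_pos : ∀ ω, 0 < G ω)
    (hG_log : Integrable (fun ω => log (G ω)) μ) (hD_pos : ∀ ω, 0 < D ω)
    (hD_char : ∀ l : ℝ, 0 ≤ l →
      ∫ ω, (1 + l * D ω) ^ (-t) ∂μ = exp (-(t * ∫ ω, log (1 + l / G ω) ∂μ))) :
    ∫ ω, D ω ^ (-t) ∂μ = exp (t * ∫ ω, log (G ω) ∂μ) := by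
  set u : ℕ → ℝ := fun n => 1 / ((n : ℝ) + 1)
  have hu_pos : ∀ n, 0 < u n := fun n => Nat.one_div_pos_of_nat
  have hu : Tendsto u atTop (𝓝[≥] 0) :=
    tendsto_nhdsWithin_of_tendsto_nhds_of_eventually_within _
      tendsto_one_div_add_atTop_nhds_zero_nat (Eventually.of_forall fun n => (hu_pos n).le)
  have h_eq n := integral_add_rpow_neg hG hG_pos hG_log hD_pos hD_char (hu_pos n)
  refine integral_eq_of_tendsto_of_monotone (f := fun n ω => (u n + D ω) ^ (-t))
    (fun n => .of_integral_ne_zero ((h_eq n).trans_ne (exp_pos _).ne'))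
    (fun n => ae_of_all _ fun ω => rpow_nonneg (add_pos (hu_pos n) (hD_pos ω)).le _)
    (ae_of_all _ fun ω n m hnm => ?_) (ae_of_all _ fun ω => ?_) ?_
  · exact rpow_le_rpow_of_nonpos (add_pos (hu_pos m) (hD_pos ω))
      (by gcongr; exact Nat.one_div_le_one_div hnm) (neg_nonpos.2 ht)
  · have h_cont : ContinuousAt (fun x => (x + D ω) ^ (-t)) 0 :=
      (continuousAt_id.add continuousAt_const).rpow_const (Or.inl (by simpa using (hD_pos ω).ne'))
    simpa [Function.comp_def] using h_cont.tendsto.comp (hu.mono_right nhdsWithin_le_nhds)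
  · simp_rw [h_eq]
    have h_lim := ((tendsto_integral_log_one_add_mul_nhdsGE_zero hG hG_pos hG_log).comp
      hu).sub_const (∫ ω, log (G ω) ∂μ)
    simpa [Function.comp_def] using (continuous_exp.tendsto _).comp ((h_lim.const_mul t).neg)

end DirichletMean

end

theorem stieltjes_dirichlet_mean_general {Ω : Type*} [MeasurableSpace Ω] (μ : Measure Ω)
    [IsProbabilityMeasure μ] (t : ℝ) (ht : 0 < t)
    (G D : Ω → ℝ) (hG_meas : Measurable G)
    (hG_pos : ∀ ω, 0 < G ω) (hD_pos : ∀ ω, 0 < D ω)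
    (hG_int : Integrable (fun ω => Real.log (G ω)) μ)
    (hD_char : ∀ l : ℝ, 0 ≤ l →
      (∫ ω, (1 + l * D ω) ^ (-t) ∂μ)
        = Real.exp (-(t * ∫ ω, Real.log (1 + l / G ω) ∂μ))) :
    (∫ ω, (D ω) ^ (-t) ∂μ) = Real.exp (t * ∫ ω, Real.log (G ω) ∂μ) ∧
    (∀ l : ℝ, 0 ≤ l →
      (∫ ω, (l + D ω) ^ (-t) ∂μ)
        = Real.exp (-(t * ((∫ ω, Real.log (1 + l * G ω) ∂μ) -
            ∫ ω, Real.log (G ω) ∂μ)))) := by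
  have h_zero := integral_rpow_neg ht.le hG_meas hG_pos hG_int hD_pos hD_char
  refine ⟨h_zero, fun l hl => ?_⟩
  rcases hl.eq_or_lt with rfl | hl
  · simpa using h_zero
  · exact integral_add_rpow_neg hG_meas hG_pos hG_int hD_pos hD_char hl

theorem stieltjes_dirichlet_mean {Ω : Type*} [MeasurableSpace Ω] (μ : Measure Ω)
    [IsProbabilityMeasure μ] (t : ℝ) (ht : 0 < t)
    (G D : Ω → ℝ) (hG_meas : Measurable G) (hD_meas : Measurable D)
    (hG_pos : ∀ ω, 0 < G ω) (hD_pos : ∀ ω, 0 < D ω)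
    (hG_int : Integrable (fun ω => Real.log (G ω)) μ)
    (hD_char : ∀ l : ℝ, 0 ≤ l →
      (∫ ω, (1 + l * D ω) ^ (-t) ∂μ)
        = Real.exp (-(t * ∫ ω, Real.log (1 + l / G ω) ∂μ))) :
    (∫ ω, (D ω) ^ (-t) ∂μ) = Real.exp (t * ∫ ω, Real.log (G ω) ∂μ) ∧
    (∀ l : ℝ, 0 ≤ l →
      (∫ ω, (l + D ω) ^ (-t) ∂μ)
        = Real.exp (-(t * ((∫ ω, Real.log (1 + l * G ω) ∂μ) -
            ∫ ω, Real.log (G ω) ∂μ)))) :=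
  stieltjes_dirichlet_mean_general μ t ht G D hG_meas hG_pos hD_pos hG_int hD_char
end

section
/- Let G be positive with E|log G| < ∞ and t > 0. Suppose D_t(G) and D_t(1/G) have densities g and h on (0,∞) satisfying for all λ > 0: ∫₀^∞ (1+λx)^{−t} g(x) dx = exp(−t E[log(1+λ/G)]) and ∫₀^∞ (1+λx)^{−t} h(x) dx = exp(−t E[log(1+λG)]). Then h(x) = x^{t−2} e^{−t E[log G]} g(1/x) for (almost every) x > 0. -/
open MeasureTheory Set Real

/-!
Let `H x = x ^ (t - 2) e^{-t E log G} g (1 / x)`. The substitution `x ↦ 1 / x` turns the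
Stieltjes transform of index `t` of `H` at `λ` into `λ ^ (-t) e^{-t E log G} S_t g (1 / λ)`, and
the duality `E log (1 + λ G) = log λ + E log G + E log (1 + λ⁻¹ / G)` identifies this with the
transform of `h`. `H` is integrable, since by Fatou `∫ y ^ (-t) g y = lim λ ^ t S_t g λ` and
`E log (1 + λ / G) ≥ log λ - E log G`. It remains that `S_t` is injective on `L¹(0, ∞)`:
differentiating in `λ` raises the index, and `S_{t+n} f 1 = 0` for all `n` says that `f`,
transported to `(0, 1)` by `y = 1 / (1 + x)`, has vanishing moments, so `f = 0` by Weierstrass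
approximation.
-/

theorem ae_eq_zero_of_forall_integral_pow_mul_eq_zero {a b : ℝ} {ψ : ℝ → ℝ}
    (hψ : IntegrableOn ψ (Icc a b)) (hmom : ∀ n : ℕ, ∫ x in Icc a b, x ^ n * ψ x = 0) :
    ψ =ᵐ[volume.restrict (Icc a b)] 0 := by
  have hpoly : ∀ p : Polynomial ℝ, ∫ x in Icc a b, p.eval x * ψ x = 0 := by
    intro p
    have hterm : ∀ n : ℕ, IntegrableOn (fun x => x ^ n * ψ x) (Icc a b) := fun n =>
      hψ.continuousOn_mul (continuous_pow n).continuousOn isCompact_Icc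
    simp_rw [Polynomial.eval_eq_sum_range, Finset.sum_mul, mul_assoc]
    rw [integral_finsetSum _ fun i _ => (hterm i).const_mul _]
    simp [integral_const_mul, hmom]
  have hcont : ∀ c : ℝ → ℝ, Continuous c → ∫ x in Icc a b, c x * ψ x = 0 := by
    intro c hc
    set B := ∫ x in Icc a b, ‖ψ x‖
    have hB : 0 ≤ B := setIntegral_nonneg measurableSet_Icc fun _ _ => norm_nonneg _
    refine abs_nonpos_iff.mp (le_of_forall_pos_le_add fun ε hε => ?_)
    obtain ⟨p, hp⟩ :=
      exists_polynomial_near_of_continuousOn a b c hc.continuousOn (ε / (B + 1)) (by positivity)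
    have hcp : ∫ x in Icc a b, c x * ψ x = ∫ x in Icc a b, (c x - p.eval x) * ψ x := by
      simp_rw [sub_mul]
      rw [integral_sub (hψ.continuousOn_mul hc.continuousOn isCompact_Icc)
        (hψ.continuousOn_mul p.continuous.continuousOn isCompact_Icc), hpoly, sub_zero]
    calc |∫ x in Icc a b, c x * ψ x| ≤ ∫ x in Icc a b, ε / (B + 1) * ‖ψ x‖ := by
          rw [hcp, ← Real.norm_eq_abs]
          refine norm_integral_le_of_norm_le (hψ.norm.const_mul _) ?_
          filter_upwards [ae_restrict_mem measurableSet_Icc] with x hx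
          rw [norm_mul, Real.norm_eq_abs, abs_sub_comm]
          exact mul_le_mul_of_nonneg_right (hp x hx).le (norm_nonneg _)
      _ ≤ 0 + ε := by
          rw [integral_const_mul, zero_add, div_mul_eq_mul_div, div_le_iff₀ (by positivity)]
          nlinarith
  exact ae_eq_zero_of_integral_contDiff_smul_eq_zero hψ.locallyIntegrable
    fun c hc _ => hcont c hc.continuous

noncomputable def stieltjesTransform (s : ℝ) (f : ℝ → ℝ) (l : ℝ) : ℝ :=
  ∫ x in Ioi 0, (1 + l * x) ^ (-s) * f x

lemma one_add_mul_rpow_neg_le_one {s l x : ℝ} (hs : 0 ≤ s) (hl : 0 ≤ l) (hx : 0 ≤ x) :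
    (1 + l * x) ^ (-s) ≤ 1 :=
  rpow_le_one_of_one_le_of_nonpos (by nlinarith) (by linarith)

lemma mul_one_add_mul_rpow_neg_sub_one_le {s l x : ℝ} (hs : 0 ≤ s) (hl : 0 < l) (hx : 0 ≤ x) :
    x * (1 + l * x) ^ (-s - 1) ≤ l⁻¹ := by
  have hb : 0 < 1 + l * x := by positivity
  rw [rpow_sub_one hb.ne', ← mul_div_assoc, div_le_iff₀ hb, mul_comm, inv_mul_eq_div,
    le_div_iff₀ hl]
  nlinarith [one_add_mul_rpow_neg_le_one hs hl.le hx, rpow_nonneg hb.le (-s)]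

lemma integrableOn_one_add_mul_rpow_neg_mul {f : ℝ → ℝ} (hf : IntegrableOn f (Ioi 0)) {s l : ℝ}
    (hs : 0 ≤ s) (hl : 0 ≤ l) :
    IntegrableOn (fun x => (1 + l * x) ^ (-s) * f x) (Ioi 0) := by
  have hmeas : Measurable fun x : ℝ => (1 + l * x) ^ (-s) := by fun_prop
  refine hf.bdd_mul (c := 1) hmeas.aestronglyMeasurable ?_
  filter_upwards [ae_restrict_mem measurableSet_Ioi] with x (hx : 0 < x)
  rw [norm_of_nonneg (by positivity)]
  exact one_add_mul_rpow_neg_le_one hs hl hx.le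

lemma stieltjesTransform_const_mul (s c : ℝ) (f : ℝ → ℝ) (l : ℝ) :
    stieltjesTransform s (fun x => c * f x) l = c * stieltjesTransform s f l := by
  simp_rw [stieltjesTransform, mul_left_comm _ c, integral_const_mul]

lemma stieltjesTransform_sub {f g : ℝ → ℝ} (hf : IntegrableOn f (Ioi 0))
    (hg : IntegrableOn g (Ioi 0)) {s l : ℝ} (hs : 0 ≤ s) (hl : 0 ≤ l) :
    stieltjesTransform s (f - g) l = stieltjesTransform s f l - stieltjesTransform s g l := by
  simp_rw [stieltjesTransform, ← integral_sub (integrableOn_one_add_mul_rpow_neg_mul hf hs hl)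
    (integrableOn_one_add_mul_rpow_neg_mul hg hs hl), Pi.sub_apply, mul_sub]

lemma hasDerivAt_one_add_mul_rpow_neg (s x l : ℝ) (hb : 0 < 1 + l * x) :
    HasDerivAt (fun l => (1 + l * x) ^ (-s)) (-s * x * (1 + l * x) ^ (-s - 1)) l := by
  have := (((hasDerivAt_id l).mul_const x).const_add 1).rpow_const (p := -s) (Or.inl hb.ne')
  simp only [id_eq] at this
  convert this using 1
  ring

theorem hasDerivAt_stieltjesTransform {f : ℝ → ℝ} (hf : IntegrableOn f (Ioi 0)) {s l : ℝ}
    (hs : 0 ≤ s) (hl : 0 < l) :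
    HasDerivAt (stieltjesTransform s f)
      (∫ x in Ioi 0, -s * x * (1 + l * x) ^ (-s - 1) * f x) l := by
  have hball : ∀ l' ∈ Metric.ball l (l / 2), l / 2 < l' := fun l' hl' => by
    rw [Metric.mem_ball, dist_eq, abs_lt] at hl'
    linarith
  refine (hasDerivAt_integral_of_dominated_loc_of_deriv_le
    (F := fun l x => (1 + l * x) ^ (-s) * f x)
    (F' := fun l x => -s * x * (1 + l * x) ^ (-s - 1) * f x)
    (bound := fun x => s * (2 / l) * ‖f x‖) (Metric.ball_mem_nhds l (half_pos hl))
    (Filter.Eventually.of_forall fun l' => ?_) (integrableOn_one_add_mul_rpow_neg_mul hf hs hl.le)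
    ?_ ?_ (hf.norm.const_mul _) ?_).2
  · have : Measurable fun x : ℝ => (1 + l' * x) ^ (-s) := by fun_prop
    exact this.aestronglyMeasurable.mul hf.aestronglyMeasurable
  · have : Measurable fun x : ℝ => -s * x * (1 + l * x) ^ (-s - 1) := by fun_prop
    exact this.aestronglyMeasurable.mul hf.aestronglyMeasurable
  · filter_upwards [ae_restrict_mem measurableSet_Ioi] with x (hx : 0 < x) l' hl'
    have hl'0 : 0 < l' := by linarith [hball l' hl']
    rw [norm_mul, mul_assoc, norm_mul, norm_neg, norm_of_nonneg hs]
    refine mul_le_mul_of_nonneg_right (mul_le_mul_of_nonneg_left ?_ hs) (norm_nonneg _)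
    rw [norm_of_nonneg (by positivity)]
    calc x * (1 + l' * x) ^ (-s - 1) ≤ l'⁻¹ :=
          mul_one_add_mul_rpow_neg_sub_one_le hs hl'0 hx.le
      _ ≤ 2 / l := by
          rw [inv_le_comm₀ hl'0 (by positivity), inv_div]
          exact (hball l' hl').le
  · filter_upwards [ae_restrict_mem measurableSet_Ioi] with x (hx : 0 < x) l' hl'
    have hl'0 : 0 < l' := by linarith [hball l' hl']
    exact (hasDerivAt_one_add_mul_rpow_neg s x l' (by positivity)).mul_const (f x)

theorem stieltjesTransform_add_one_eq_zero {f : ℝ → ℝ} (hf : IntegrableOn f (Ioi 0)) {s : ℝ}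
    (hs : 0 < s) (h : ∀ l, 0 < l → stieltjesTransform s f l = 0) {l : ℝ} (hl : 0 < l) :
    stieltjesTransform (s + 1) f l = 0 := by
  have hderiv : ∫ x in Ioi 0, -s * x * (1 + l * x) ^ (-s - 1) * f x = 0 :=
    (hasDerivAt_stieltjesTransform hf hs.le hl).unique <|
      (hasDerivAt_const l 0).congr_of_eventuallyEq ((eventually_gt_nhds hl).mono h)
  have hkernel : ∀ x ∈ Ioi (0 : ℝ), -s * x * (1 + l * x) ^ (-s - 1) * f x =
      s / l * ((1 + l * x) ^ (-(s + 1)) * f x - (1 + l * x) ^ (-s) * f x) := by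
    intro x (hx : 0 < x)
    have hb : 0 < 1 + l * x := by positivity
    rw [neg_add', rpow_sub_one hb.ne']
    field_simp
    ring
  rw [setIntegral_congr_fun measurableSet_Ioi hkernel, integral_const_mul,
    integral_sub (integrableOn_one_add_mul_rpow_neg_mul hf (by linarith) hl.le)
      (integrableOn_one_add_mul_rpow_neg_mul hf hs.le hl.le)] at hderiv
  change s / l * (stieltjesTransform (s + 1) f l - stieltjesTransform s f l) = 0 at hderiv
  rw [h l hl, sub_zero] at hderiv
  exact (mul_eq_zero.mp hderiv).resolve_left (by positivity)

theorem stieltjesTransform_add_nat_eq_zero {f : ℝ → ℝ} (hf : IntegrableOn f (Ioi 0)) {s : ℝ}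
    (hs : 0 < s) (h : ∀ l, 0 < l → stieltjesTransform s f l = 0) (n : ℕ) {l : ℝ} (hl : 0 < l) :
    stieltjesTransform (s + n) f l = 0 := by
  induction n generalizing l with
  | zero => simpa using h l hl
  | succ n ih =>
    rw [Nat.cast_succ, ← add_assoc]
    exact stieltjesTransform_add_one_eq_zero hf (by positivity) (fun l' hl' => ih hl') hl

lemma image_inv_sub_one_Ioo : (fun y : ℝ => y⁻¹ - 1) '' Ioo 0 1 = Ioi 0 := by
  ext x
  refine ⟨?_, fun (hx : 0 < x) => ⟨(1 + x)⁻¹, ⟨by positivity, inv_lt_one_of_one_lt₀ (by linarith)⟩,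
    by simp⟩⟩
  rintro ⟨y, ⟨hy0, hy1⟩, rfl⟩
  simpa using one_lt_inv₀ hy0 |>.mpr hy1

lemma hasDerivWithinAt_inv_sub_one {y : ℝ} (hy : y ∈ Ioo (0 : ℝ) 1) :
    HasDerivWithinAt (fun y : ℝ => y⁻¹ - 1) (-(y ^ 2)⁻¹) (Ioo 0 1) y :=
  ((hasDerivAt_inv hy.1.ne').sub_const 1).hasDerivWithinAt

lemma injOn_inv_sub_one : InjOn (fun y : ℝ => y⁻¹ - 1) (Ioo 0 1) :=
  fun _ _ _ _ h => inv_injective (sub_left_injective h)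

lemma integral_Ioi_eq_integral_Ioo_inv_sub_one (k : ℝ → ℝ) :
    ∫ x in Ioi 0, k x = ∫ y in Ioo 0 1, (y ^ 2)⁻¹ * k (y⁻¹ - 1) := by
  rw [← image_inv_sub_one_Ioo, integral_image_eq_integral_abs_deriv_smul measurableSet_Ioo
    (fun y hy => hasDerivWithinAt_inv_sub_one hy) injOn_inv_sub_one]
  simp

lemma integrableOn_Ioi_iff_integrableOn_Ioo_inv_sub_one (k : ℝ → ℝ) :
    IntegrableOn k (Ioi 0) ↔ IntegrableOn (fun y => (y ^ 2)⁻¹ * k (y⁻¹ - 1)) (Ioo 0 1) := by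
  rw [← image_inv_sub_one_Ioo, integrableOn_image_iff_integrableOn_abs_deriv_smul measurableSet_Ioo
    (fun y hy => hasDerivWithinAt_inv_sub_one hy) injOn_inv_sub_one]
  simp

lemma inv_rpow_neg {y : ℝ} (hy : 0 ≤ y) (a : ℝ) : y⁻¹ ^ (-a) = y ^ a := by
  rw [inv_rpow hy, rpow_neg hy, inv_inv]

theorem ae_eq_zero_of_stieltjesTransform_eq_zero {f : ℝ → ℝ} (hf : IntegrableOn f (Ioi 0))
    {t : ℝ} (ht : 0 < t) (h : ∀ l, 0 < l → stieltjesTransform t f l = 0) :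
    ∀ᵐ x ∂volume.restrict (Ioi 0), f x = 0 := by
  set F : ℝ → ℝ := fun x => (1 + x) ^ (-t) * f x
  -- in `y = (1 + x)⁻¹` the transforms of index `t + n` at `l = 1` are the moments of `ψ`
  set ψ : ℝ → ℝ := fun y => (y ^ 2)⁻¹ * F (y⁻¹ - 1)
  have hF : IntegrableOn F (Ioi 0) := by
    simpa [F] using integrableOn_one_add_mul_rpow_neg_mul hf ht.le zero_le_one
  have hψ : IntegrableOn ψ (Icc 0 1) := by
    rw [integrableOn_Icc_iff_integrableOn_Ioo]
    exact (integrableOn_Ioi_iff_integrableOn_Ioo_inv_sub_one F).mp hF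
  have hmom : ∀ n : ℕ, ∫ y in Icc 0 1, y ^ n * ψ y = 0 := by
    intro n
    rw [integral_Icc_eq_integral_Ioo]
    refine Eq.trans ?_ (stieltjesTransform_add_nat_eq_zero hf ht h n one_pos)
    rw [stieltjesTransform, integral_Ioi_eq_integral_Ioo_inv_sub_one]
    refine setIntegral_congr_fun measurableSet_Ioo fun y ⟨hy0, _⟩ => ?_
    simp only [ψ, F, one_mul, add_sub_cancel, inv_rpow_neg hy0.le, rpow_add hy0, rpow_natCast]
    ring
  have hψ0 : ψ =ᵐ[volume.restrict (Ioo 0 1)] 0 := by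
    rw [Measure.restrict_congr_set Ioo_ae_eq_Icc]
    exact ae_eq_zero_of_forall_integral_pow_mul_eq_zero hψ hmom
  have hF0 : ∫ x in Ioi 0, ‖F x‖ = 0 := by
    rw [integral_Ioi_eq_integral_Ioo_inv_sub_one]
    refine integral_eq_zero_of_ae ?_
    filter_upwards [hψ0] with y hy
    simpa [ψ, norm_mul] using hy
  filter_upwards [(integral_eq_zero_iff_of_nonneg_ae (ae_of_all _ fun x => norm_nonneg (F x))
    hF.norm).mp hF0, ae_restrict_mem measurableSet_Ioi] with x hx (hx0 : 0 < x)
  simpa [F, (rpow_pos_of_pos (by positivity : 0 < 1 + x) (-t)).ne'] using hx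

lemma one_le_one_add_mul_exp {a : ℝ} (ha : 0 ≤ a) (s : ℝ) : 1 ≤ 1 + a * exp s :=
  le_add_of_nonneg_right (mul_nonneg ha (exp_pos s).le)

lemma log_one_add_mul_exp_le {a : ℝ} (ha : 0 ≤ a) (s : ℝ) :
    log (1 + a * exp s) ≤ log (1 + a) + |s| := by
  have h1 : 1 ≤ exp |s| := one_le_exp (abs_nonneg s)
  have h2 : exp s ≤ exp |s| := exp_le_exp.mpr (le_abs_self s)
  calc log (1 + a * exp s) ≤ log ((1 + a) * exp |s|) :=
        log_le_log (by positivity) (by nlinarith)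
    _ = log (1 + a) + |s| := by rw [log_mul (by positivity) (exp_pos _).ne', log_exp]

section LogMoments

variable {Ω : Type*} [MeasurableSpace Ω] {μ : Measure Ω} {G : Ω → ℝ}

lemma MeasureTheory.Integrable.log_one_add_mul_exp [IsFiniteMeasure μ] {Y : Ω → ℝ}
    (hY : Integrable Y μ) {a : ℝ} (ha : 0 ≤ a) :
    Integrable (fun ω => log (1 + a * exp (Y ω))) μ := by
  have hcont : Continuous fun s => log (1 + a * exp s) := by
    refine (continuous_const.add (continuous_const.mul continuous_exp)).log fun s => ?_
    exact (zero_lt_one.trans_le (one_le_one_add_mul_exp ha s)).ne'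
  refine ((integrable_const (log (1 + a))).add hY.abs).mono'
    (hcont.comp_aestronglyMeasurable hY.aestronglyMeasurable) (ae_of_all _ fun ω => ?_)
  rw [norm_of_nonneg (log_nonneg (one_le_one_add_mul_exp ha (Y ω)))]
  exact log_one_add_mul_exp_le ha (Y ω)

lemma integrable_log_one_add_div_s17 [IsFiniteMeasure μ] (hG_pos : ∀ ω, 0 < G ω)
    (hG : Integrable (fun ω => log (G ω)) μ) {l : ℝ} (hl : 0 ≤ l) :
    Integrable (fun ω => log (1 + l / G ω)) μ := by
  simpa [div_eq_mul_inv, exp_neg, exp_log (hG_pos _)] using hG.neg.log_one_add_mul_exp hl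

theorem integral_log_one_add_mul_eq [IsProbabilityMeasure μ] (hG_pos : ∀ ω, 0 < G ω)
    (hG : Integrable (fun ω => log (G ω)) μ) {l : ℝ} (hl : 0 < l) :
    ∫ ω, log (1 + l * G ω) ∂μ = log l + ∫ ω, log (G ω) ∂μ + ∫ ω, log (1 + l⁻¹ / G ω) ∂μ := by
  have hpt : ∀ ω, log (1 + l * G ω) = log l + log (G ω) + log (1 + l⁻¹ / G ω) := fun ω => by
    have hG := hG_pos ω
    rw [← log_mul hl.ne' hG.ne', ← log_mul (by positivity) (by positivity)]
    congr 1
    field_simp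
    ring
  have hlG : Integrable (fun ω => log l + log (G ω)) μ := (integrable_const _).add hG
  simp_rw [hpt]
  rw [integral_add hlG (integrable_log_one_add_div_s17 hG_pos hG
    (inv_pos.mpr hl).le), integral_add (integrable_const _) hG, integral_const, probReal_univ,
    one_smul]

lemma log_sub_integral_log_le [IsProbabilityMeasure μ] (hG_pos : ∀ ω, 0 < G ω)
    (hG : Integrable (fun ω => log (G ω)) μ) {l : ℝ} (hl : 0 < l) :
    log l - ∫ ω, log (G ω) ∂μ ≤ ∫ ω, log (1 + l / G ω) ∂μ := by
  have hdual := integral_log_one_add_mul_eq hG_pos hG (inv_pos.mpr hl)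
  rw [inv_inv, log_inv] at hdual
  have : 0 ≤ ∫ ω, log (1 + l⁻¹ * G ω) ∂μ := integral_nonneg fun ω =>
    log_nonneg (by have := hG_pos ω; have := inv_pos.mpr hl; nlinarith)
  linarith

end LogMoments

lemma image_inv_Ioi_zero : (fun x : ℝ => x⁻¹) '' Ioi 0 = Ioi 0 := by
  ext x
  exact ⟨fun ⟨y, (hy : 0 < y), hyx⟩ => hyx ▸ inv_pos.mpr hy,
    fun (hx : 0 < x) => ⟨x⁻¹, inv_pos.mpr hx, inv_inv x⟩⟩

lemma hasDerivWithinAt_inv_Ioi {y : ℝ} (hy : y ∈ Ioi (0 : ℝ)) :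
    HasDerivWithinAt (fun y : ℝ => y⁻¹) (-(y ^ 2)⁻¹) (Ioi 0) y :=
  (hasDerivAt_inv (ne_of_gt hy)).hasDerivWithinAt

lemma integral_Ioi_eq_integral_Ioi_inv (k : ℝ → ℝ) :
    ∫ x in Ioi 0, k x = ∫ y in Ioi 0, (y ^ 2)⁻¹ * k y⁻¹ := by
  conv_lhs => rw [← image_inv_Ioi_zero]
  rw [integral_image_eq_integral_abs_deriv_smul measurableSet_Ioi
    (fun y hy => hasDerivWithinAt_inv_Ioi hy) inv_injective.injOn]
  simp

lemma integrableOn_Ioi_iff_integrableOn_Ioi_inv (k : ℝ → ℝ) :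
    IntegrableOn k (Ioi 0) ↔ IntegrableOn (fun y => (y ^ 2)⁻¹ * k y⁻¹) (Ioi 0) := by
  conv_lhs => rw [← image_inv_Ioi_zero]
  rw [integrableOn_image_iff_integrableOn_abs_deriv_smul measurableSet_Ioi
    (fun y hy => hasDerivWithinAt_inv_Ioi hy) inv_injective.injOn]
  simp

lemma inv_sq_mul_inv_rpow_sub_two {y : ℝ} (hy : 0 < y) (t : ℝ) :
    (y ^ 2)⁻¹ * y⁻¹ ^ (t - 2) = y ^ (-t) := by
  rw [inv_rpow hy.le, ← rpow_natCast, ← mul_inv, ← rpow_add hy, ← rpow_neg hy.le]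
  norm_num

lemma integrableOn_rpow_sub_two_mul_comp_inv_iff (t : ℝ) (g : ℝ → ℝ) :
    IntegrableOn (fun x => x ^ (t - 2) * g x⁻¹) (Ioi 0) ↔
      IntegrableOn (fun y => y ^ (-t) * g y) (Ioi 0) := by
  rw [integrableOn_Ioi_iff_integrableOn_Ioi_inv]
  refine integrableOn_congr_fun (fun y (hy : 0 < y) => ?_) measurableSet_Ioi
  rw [inv_inv, ← mul_assoc, inv_sq_mul_inv_rpow_sub_two hy]

theorem stieltjesTransform_rpow_sub_two_mul_comp_inv (t : ℝ) (g : ℝ → ℝ) {l : ℝ} (hl : 0 < l) :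
    stieltjesTransform t (fun x => x ^ (t - 2) * g x⁻¹) l =
      l ^ (-t) * stieltjesTransform t g l⁻¹ := by
  rw [stieltjesTransform, integral_Ioi_eq_integral_Ioi_inv, stieltjesTransform,
    ← integral_const_mul]
  refine setIntegral_congr_fun measurableSet_Ioi fun y (hy : 0 < y) => ?_
  have hsplit : 1 + l * y⁻¹ = l * y⁻¹ * (1 + l⁻¹ * y) := by field_simp; ring
  have hcancel : (y ^ 2)⁻¹ * y⁻¹ ^ (t - 2) * y⁻¹ ^ (-t) = 1 := by
    rw [inv_sq_mul_inv_rpow_sub_two hy, inv_rpow hy.le, rpow_neg hy.le, inv_inv,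
      inv_mul_cancel₀ (rpow_pos_of_pos hy t).ne']
  rw [hsplit, mul_rpow (by positivity) (by positivity), mul_rpow hl.le (by positivity), inv_inv]
  linear_combination (l ^ (-t) * ((1 + l⁻¹ * y) ^ (-t) * g y)) * hcancel

lemma rpow_mul_one_add_mul_rpow_neg {l y : ℝ} (hl : 0 < l) (hy : 0 ≤ y) (t : ℝ) :
    l ^ t * (1 + l * y) ^ (-t) = (l⁻¹ + y) ^ (-t) := by
  rw [show l⁻¹ + y = l⁻¹ * (1 + l * y) by field_simp, mul_rpow (by positivity) (by positivity),
    inv_rpow hl.le, rpow_neg hl.le, inv_inv]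

theorem integrableOn_rpow_neg_mul_of_stieltjesTransform_le {g : ℝ → ℝ}
    (hg : IntegrableOn g (Ioi 0)) (hg_nonneg : ∀ x, 0 < x → 0 ≤ g x) {t K : ℝ} (ht : 0 ≤ t)
    (hK : ∀ l, 0 < l → l ^ t * stieltjesTransform t g l ≤ K) :
    IntegrableOn (fun y => y ^ (-t) * g y) (Ioi 0) := by
  set G : ℕ → ℝ → ℝ := fun n y => ((n + 1 : ℝ)⁻¹ + y) ^ (-t) * g y
  have hG_eq : ∀ n : ℕ, ∀ y ∈ Ioi (0 : ℝ),
      (n + 1 : ℝ) ^ t * ((1 + (n + 1) * y) ^ (-t) * g y) = G n y := fun n y (hy : 0 < y) => by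
    rw [← mul_assoc, rpow_mul_one_add_mul_rpow_neg (by positivity) hy.le]
  have hG_int : ∀ n : ℕ, IntegrableOn (G n) (Ioi 0) := fun n =>
    IntegrableOn.congr_fun
      ((integrableOn_one_add_mul_rpow_neg_mul hg ht (by positivity)).const_mul _)
      (hG_eq n) measurableSet_Ioi
  refine integrable_of_tendsto (G := G) ?_ (fun n => (hG_int n).aestronglyMeasurable) ?_
  · filter_upwards [ae_restrict_mem measurableSet_Ioi] with y (hy : 0 < y)
    refine ((continuousAt_rpow_const y (-t) (Or.inl hy.ne')).tendsto.comp ?_).mul_const _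
    simpa using (tendsto_one_div_add_atTop_nhds_zero_nat (𝕜 := ℝ)).add_const y
  · refine ne_top_of_le_ne_top (ENNReal.ofReal_ne_top (r := K))
      (Filter.liminf_le_of_frequently_le' (Filter.Frequently.of_forall fun n => ?_))
    have hG_nonneg : 0 ≤ᵐ[volume.restrict (Ioi 0)] G n := by
      filter_upwards [ae_restrict_mem measurableSet_Ioi] with y (hy : 0 < y)
      exact mul_nonneg (by positivity) (hg_nonneg y hy)
    rw [lintegral_congr_ae (hG_nonneg.mono fun y hy => enorm_of_nonneg hy),
      ← ofReal_integral_eq_lintegral_ofReal (hG_int n) hG_nonneg]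
    refine ENNReal.ofReal_le_ofReal ?_
    rw [← setIntegral_congr_fun measurableSet_Ioi (hG_eq n), integral_const_mul]
    exact hK _ (by positivity)

theorem dirichlet_mean_density_duality_general {Ω : Type*} [MeasurableSpace Ω]
    (μ : Measure Ω) [IsProbabilityMeasure μ] (t : ℝ) (ht : 0 < t)
    (G : Ω → ℝ) (hG_pos : ∀ ω, 0 < G ω)
    (hG_int : Integrable (fun ω => Real.log (G ω)) μ)
    (g h : ℝ → ℝ)
    (hg_nonneg : ∀ x, 0 < x → 0 ≤ g x)
    (hg_int : IntegrableOn g (Ioi 0)) (hh_int : IntegrableOn h (Ioi 0))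
    (hg_char : ∀ l : ℝ, 0 < l →
      (∫ x in Ioi (0:ℝ), (1 + l * x) ^ (-t) * g x)
        = Real.exp (-(t * ∫ ω, Real.log (1 + l / G ω) ∂μ)))
    (hh_char : ∀ l : ℝ, 0 < l →
      (∫ x in Ioi (0:ℝ), (1 + l * x) ^ (-t) * h x)
        = Real.exp (-(t * ∫ ω, Real.log (1 + l * G ω) ∂μ))) :
    ∀ᵐ x ∂(volume.restrict (Ioi (0:ℝ))),
      h x = x ^ (t - 2) * Real.exp (-(t * ∫ ω, Real.log (G ω) ∂μ)) * g (1 / x) := by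
  set L := ∫ ω, log (G ω) ∂μ with hL
  set H : ℝ → ℝ := fun x => exp (-(t * L)) * (x ^ (t - 2) * g x⁻¹)
  have hH_int : IntegrableOn H (Ioi 0) := by
    refine Integrable.const_mul ((integrableOn_rpow_sub_two_mul_comp_inv_iff t g).mpr ?_) _
    refine integrableOn_rpow_neg_mul_of_stieltjesTransform_le hg_int hg_nonneg ht.le
      (K := exp (t * L)) fun l hl => ?_
    rw [stieltjesTransform, hg_char l hl, rpow_def_of_pos hl, ← exp_add, exp_le_exp]
    nlinarith [log_sub_integral_log_le hG_pos hG_int hl]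
  have hH_char : ∀ l, 0 < l → stieltjesTransform t H l = stieltjesTransform t h l := by
    intro l hl
    rw [stieltjesTransform_const_mul, stieltjesTransform_rpow_sub_two_mul_comp_inv t g hl,
      stieltjesTransform, hg_char _ (inv_pos.2 hl), stieltjesTransform, hh_char l hl,
      integral_log_one_add_mul_eq hG_pos hG_int hl, ← hL, rpow_def_of_pos hl, ← exp_add,
      ← exp_add]
    ring_nf
  have hzero := ae_eq_zero_of_stieltjesTransform_eq_zero (hh_int.sub hH_int) ht fun l hl => by
    rw [stieltjesTransform_sub hh_int hH_int ht.le hl.le, hH_char l hl, sub_self]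
  filter_upwards [hzero] with x hx
  rw [sub_eq_zero.mp hx, one_div]
  ring

theorem dirichlet_mean_density_duality {Ω : Type*} [MeasurableSpace Ω]
    (μ : Measure Ω) [IsProbabilityMeasure μ] (t : ℝ) (ht : 0 < t)
    (G : Ω → ℝ) (hG_meas : Measurable G) (hG_pos : ∀ ω, 0 < G ω)
    (hG_int : Integrable (fun ω => Real.log (G ω)) μ)
    (g h : ℝ → ℝ) (hg_meas : Measurable g) (hh_meas : Measurable h)
    (hg_nonneg : ∀ x, 0 < x → 0 ≤ g x) (hh_nonneg : ∀ x, 0 < x → 0 ≤ h x)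
    (hg_density : ∫ x in Ioi (0:ℝ), g x = 1)
    (hh_density : ∫ x in Ioi (0:ℝ), h x = 1)
    (hg_int : IntegrableOn g (Ioi 0)) (hh_int : IntegrableOn h (Ioi 0))
    (hg_char : ∀ l : ℝ, 0 < l →
      (∫ x in Ioi (0:ℝ), (1 + l * x) ^ (-t) * g x)
        = Real.exp (-(t * ∫ ω, Real.log (1 + l / G ω) ∂μ)))
    (hh_char : ∀ l : ℝ, 0 < l →
      (∫ x in Ioi (0:ℝ), (1 + l * x) ^ (-t) * h x)
        = Real.exp (-(t * ∫ ω, Real.log (1 + l * G ω) ∂μ))) :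
    ∀ᵐ x ∂(volume.restrict (Ioi (0:ℝ))),
      h x = x ^ (t - 2) * Real.exp (-(t * ∫ ω, Real.log (G ω) ∂μ)) * g (1 / x) :=
  dirichlet_mean_density_duality_general μ t ht G hG_pos hG_int g h hg_nonneg hg_int hh_int hg_char
    hh_char
end

section
/- For 0 < α < 1 and λ ≥ 0, the function x ↦ (α/Γ(1−α)) x^{−1−α}(1 − e^{−x}) on (0,∞) is a probability density, and its Laplace transform equals (1+λ)^α − λ^α: ∫₀^∞ e^{−λx} (α/Γ(1−α)) x^{−1−α} (1 − e^{−x}) dx = (1+λ)^α − λ^α. -/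
/-!
Integrating by parts against `-x^{-α}/α` turns `∫₀^∞ (1 - e^{-cx}) x^{-1-α} dx` into
`(c/α) ∫₀^∞ e^{-cx} x^{-α} dx = c^α Γ(1-α)/α`; the boundary terms vanish because
`0 ≤ 1 - e^{-cx} ≤ min(cx, 1)`. Since `e^{-λx}(1 - e^{-x}) = (1 - e^{-(1+λ)x}) - (1 - e^{-λx})`,
the Laplace transform of the density is a difference of two such integrals, and `λ = 0` gives
total mass one.
-/

open MeasureTheory Set Real Filter Topology

lemma integrableOn_exp_neg_mul_mul_rpow {α c : ℝ} (hα1 : α < 1) (hc : 0 < c) :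
    IntegrableOn (fun x ↦ exp (-(c * x)) * x ^ (-α)) (Ioi 0) := by
  refine (integrableOn_rpow_mul_exp_neg_mul_rpow (p := 1) (s := -α) (by linarith) one_pos
    hc).congr_fun (fun x _ ↦ ?_) measurableSet_Ioi
  simp only [rpow_one, neg_mul]
  ring

lemma integral_exp_neg_mul_mul_rpow {α c : ℝ} (hα1 : α < 1) (hc : 0 < c) :
    ∫ x in Ioi (0 : ℝ), exp (-(c * x)) * x ^ (-α) = c ^ (α - 1) * Gamma (1 - α) := by
  have := integral_rpow_mul_exp_neg_mul_Ioi (a := 1 - α) (by linarith) hc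
  rw [one_div, inv_rpow hc.le, ← rpow_neg hc.le, neg_sub, sub_sub_cancel_left] at this
  rw [← this]
  simp_rw [mul_comm (exp _)]

section OneSubExpNegMulRpow

variable {c x : ℝ}

lemma one_sub_exp_neg_mul_mul_rpow_nonneg (hc : 0 ≤ c) (hx : 0 < x) (s : ℝ) :
    0 ≤ (1 - exp (-(c * x))) * x ^ s := by
  have : exp (-(c * x)) ≤ 1 := exp_le_one_iff.2 (by nlinarith)
  exact mul_nonneg (by linarith) (rpow_nonneg hx.le s)

lemma one_sub_exp_neg_mul_mul_rpow_le_rpow (hx : 0 < x) (s : ℝ) :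
    (1 - exp (-(c * x))) * x ^ s ≤ x ^ s := by
  have := exp_pos (-(c * x))
  exact mul_le_of_le_one_left (rpow_nonneg hx.le s) (by linarith)

lemma one_sub_exp_neg_mul_mul_rpow_le_mul_rpow_add_one (hx : 0 < x) (s : ℝ) :
    (1 - exp (-(c * x))) * x ^ s ≤ c * x ^ (s + 1) := by
  have := one_sub_le_exp_neg (c * x)
  calc (1 - exp (-(c * x))) * x ^ s ≤ (c * x) * x ^ s :=
        mul_le_mul_of_nonneg_right (by linarith) (rpow_nonneg hx.le s)
    _ = c * x ^ (s + 1) := by rw [rpow_add_one hx.ne']; ring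

variable {α : ℝ}

lemma integrableOn_one_sub_exp_neg_mul_mul_rpow (hα0 : 0 < α) (hα1 : α < 1) (hc : 0 ≤ c) :
    IntegrableOn (fun x ↦ (1 - exp (-(c * x))) * x ^ (-1 - α)) (Ioi 0) := by
  set f := fun x : ℝ ↦ (1 - exp (-(c * x))) * x ^ (-1 - α)
  have dominated : ∀ s ⊆ Ioi (0 : ℝ), MeasurableSet s → ∀ g : ℝ → ℝ, IntegrableOn g s →
      (∀ x ∈ s, f x ≤ g x) → IntegrableOn f s := by
    intro s hs hsm g hg hfg
    have hf : ContinuousOn f s := by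
      refine (Continuous.continuousOn (by fun_prop)).mul ?_
      exact continuousOn_id.rpow_const fun x hx ↦ Or.inl (hs hx).ne'
    refine hg.mono' (hf.aestronglyMeasurable hsm) ((ae_restrict_iff' hsm).2 (ae_of_all _ ?_))
    intro x hx
    rw [norm_of_nonneg (one_sub_exp_neg_mul_mul_rpow_nonneg hc (hs hx) _)]
    exact hfg x hx
  rw [← Ioc_union_Ioi_eq_Ioi zero_le_one]
  refine (dominated _ Ioc_subset_Ioi_self measurableSet_Ioc (fun x ↦ c * x ^ (-1 - α + 1))
    ?_ fun x hx ↦ one_sub_exp_neg_mul_mul_rpow_le_mul_rpow_add_one hx.1 _).union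
    (dominated _ (Ioi_subset_Ioi zero_le_one) measurableSet_Ioi (fun x ↦ x ^ (-1 - α))
    ?_ fun x hx ↦ one_sub_exp_neg_mul_mul_rpow_le_rpow (zero_lt_one.trans hx) _)
  · exact ((intervalIntegral.intervalIntegrable_rpow' (by linarith)).1).const_mul c
  · exact integrableOn_Ioi_rpow_of_lt (by linarith) zero_lt_one

lemma tendsto_one_sub_exp_neg_mul_mul_rpow_nhdsGT_zero (hα1 : α < 1) (hc : 0 ≤ c) :
    Tendsto (fun x ↦ (1 - exp (-(c * x))) * x ^ (-α)) (𝓝[>] 0) (𝓝 0) := by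
  have hbound : Tendsto (fun x : ℝ ↦ c * x ^ (-α + 1)) (𝓝[>] 0) (𝓝 0) := by
    have := ((continuousAt_rpow_const 0 (-α + 1) (Or.inr (by linarith))).tendsto.mono_left
      (nhdsWithin_le_nhds (s := Ioi 0))).const_mul c
    rwa [zero_rpow (by linarith), mul_zero] at this
  refine squeeze_zero' ?_ ?_ hbound
  · filter_upwards [self_mem_nhdsWithin] with x hx
    exact one_sub_exp_neg_mul_mul_rpow_nonneg hc hx _
  · filter_upwards [self_mem_nhdsWithin] with x hx
    exact one_sub_exp_neg_mul_mul_rpow_le_mul_rpow_add_one hx _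

lemma tendsto_one_sub_exp_neg_mul_mul_rpow_atTop (hα0 : 0 < α) (hc : 0 ≤ c) :
    Tendsto (fun x ↦ (1 - exp (-(c * x))) * x ^ (-α)) atTop (𝓝 0) := by
  refine squeeze_zero' ?_ ?_ (tendsto_rpow_neg_atTop hα0)
  · filter_upwards [eventually_gt_atTop 0] with x hx
    exact one_sub_exp_neg_mul_mul_rpow_nonneg hc hx _
  · filter_upwards [eventually_gt_atTop 0] with x hx
    exact one_sub_exp_neg_mul_mul_rpow_le_rpow hx _

end OneSubExpNegMulRpow

lemma integral_one_sub_exp_neg_mul_mul_rpow {α c : ℝ} (hα0 : 0 < α) (hα1 : α < 1) (hc : 0 ≤ c) :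
    ∫ x in Ioi (0 : ℝ), (1 - exp (-(c * x))) * x ^ (-1 - α) = c ^ α * Gamma (1 - α) / α := by
  rcases hc.eq_or_lt with rfl | hc
  · simp [zero_rpow hα0.ne']
  have hu (x : ℝ) (_ : x ∈ Ioi (0 : ℝ)) :
      HasDerivAt (fun x ↦ 1 - exp (-(c * x))) (c * exp (-(c * x))) x := by
    refine ((((hasDerivAt_id x).const_mul c).neg.exp).const_sub 1).congr_deriv ?_
    simp only [id, mul_one, Pi.neg_apply]
    ring
  have hv (x : ℝ) (hx : x ∈ Ioi (0 : ℝ)) :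
      HasDerivAt (fun x ↦ -α⁻¹ * x ^ (-α)) (x ^ (-1 - α)) x := by
    refine ((hasDerivAt_rpow_const (Or.inl (ne_of_gt hx))).const_mul (-α⁻¹)).congr_deriv ?_
    rw [show -α - 1 = -1 - α by ring]
    field_simp
  have hu'v : IntegrableOn (fun x ↦ c * exp (-(c * x)) * (-α⁻¹ * x ^ (-α))) (Ioi 0) :=
    (integrableOn_congr_fun (fun x _ ↦ by ring) measurableSet_Ioi).1
      ((integrableOn_exp_neg_mul_mul_rpow hα1 hc).const_mul (-(c * α⁻¹)))
  have huv (l : Filter ℝ) (h : Tendsto (fun x ↦ (1 - exp (-(c * x))) * x ^ (-α)) l (𝓝 0)) :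
      Tendsto (fun x ↦ (1 - exp (-(c * x))) * (-α⁻¹ * x ^ (-α))) l (𝓝 0) := by
    simpa only [mul_zero] using (h.const_mul (-α⁻¹)).congr fun x ↦ by ring
  rw [integral_Ioi_mul_deriv_eq_deriv_mul hu hv
    (integrableOn_one_sub_exp_neg_mul_mul_rpow hα0 hα1 hc.le) hu'v
    (huv _ (tendsto_one_sub_exp_neg_mul_mul_rpow_nhdsGT_zero hα1 hc.le))
    (huv _ (tendsto_one_sub_exp_neg_mul_mul_rpow_atTop hα0 hc.le))]
  have hcomm (x : ℝ) : c * exp (-(c * x)) * (-α⁻¹ * x ^ (-α)) =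
      -(c * α⁻¹) * (exp (-(c * x)) * x ^ (-α)) := by ring
  simp_rw [hcomm]
  rw [integral_const_mul, integral_exp_neg_mul_mul_rpow hα1 hc, rpow_sub_one hc.ne']
  field_simp
  ring

lemma integral_exp_neg_mul_mul_one_sub_exp_neg_mul_rpow {α l : ℝ} (hα0 : 0 < α) (hα1 : α < 1)
    (hl : 0 ≤ l) :
    ∫ x in Ioi (0 : ℝ), exp (-(l * x)) * ((1 - exp (-x)) * x ^ (-1 - α)) =
      Gamma (1 - α) / α * ((1 + l) ^ α - l ^ α) := by
  have hl1 : 0 ≤ 1 + l := by linarith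
  have hsplit (x : ℝ) : exp (-(l * x)) * ((1 - exp (-x)) * x ^ (-1 - α)) =
      (1 - exp (-((1 + l) * x))) * x ^ (-1 - α) - (1 - exp (-(l * x))) * x ^ (-1 - α) := by
    rw [show -((1 + l) * x) = -(l * x) + -x by ring, exp_add]
    ring
  simp_rw [hsplit]
  rw [integral_sub (integrableOn_one_sub_exp_neg_mul_mul_rpow hα0 hα1 hl1)
    (integrableOn_one_sub_exp_neg_mul_mul_rpow hα0 hα1 hl),
    integral_one_sub_exp_neg_mul_mul_rpow hα0 hα1 hl1,
    integral_one_sub_exp_neg_mul_mul_rpow hα0 hα1 hl]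
  ring

theorem density_excursion_length (α : ℝ) (hα0 : 0 < α) (hα1 : α < 1) :
    (∫ x in Ioi (0:ℝ),
        (α / Real.Gamma (1 - α)) * x ^ (-1 - α) * (1 - Real.exp (-x)) = 1) ∧
    (∀ l : ℝ, 0 ≤ l →
      ∫ x in Ioi (0:ℝ), Real.exp (-(l * x)) *
          ((α / Real.Gamma (1 - α)) * x ^ (-1 - α) * (1 - Real.exp (-x)))
        = (1 + l) ^ α - l ^ α) := by
  have hΓ : Gamma (1 - α) ≠ 0 := (Gamma_pos_of_pos (by linarith)).ne'
  have laplace (l : ℝ) (hl : 0 ≤ l) : ∫ x in Ioi (0:ℝ), exp (-(l * x)) *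
      ((α / Gamma (1 - α)) * x ^ (-1 - α) * (1 - exp (-x))) = (1 + l) ^ α - l ^ α := by
    have hnormalize (x : ℝ) :
        exp (-(l * x)) * ((α / Gamma (1 - α)) * x ^ (-1 - α) * (1 - exp (-x))) =
          α / Gamma (1 - α) * (exp (-(l * x)) * ((1 - exp (-x)) * x ^ (-1 - α))) := by
      ring
    simp_rw [hnormalize]
    rw [integral_const_mul, integral_exp_neg_mul_mul_one_sub_exp_neg_mul_rpow hα0 hα1 hl]
    field_simp
  refine ⟨?_, laplace⟩
  simpa [zero_rpow hα0.ne'] using laplace 0 le_rfl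
end
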